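/- arXiv:2011.05481 — 6 statements merged into one kernel-verified Lean document; each statement's English description precedes it below -/
import Mathlib

section
/- If for two distinct vectors x, y in a convex set K, neither x precedes y nor y precedes x, then the midpoint (x+y)/2 lies in K and precedes both x and y: (x+y)/2 ≺ x and (x+y)/2 ≺ y. -/
open Finset

/-- Level set size: number of indices whose ratio `x i / lam i` is at least `z`. -/
noncomputable def levelSize {m : ℕ} (lam x : Fin m → ℝ) (z : ℝ) : ℕ :=
  (Finset.univ.filter (fun i => z ≤ x i / lam i)).card

/-- `x` precedes `y`: some threshold `z` with strictly smaller level set size for `x`,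
    and equal level set sizes above `z`. -/
def Precedes {m : ℕ} (lam x y : Fin m → ℝ) : Prop :=
  ∃ z : ℝ, levelSize lam x z < levelSize lam y z ∧
    ∀ z' : ℝ, z < z' → levelSize lam x z' = levelSize lam y z'

namespace MidAux

noncomputable def cnt {m : ℕ} (u : Fin m → ℝ) (z : ℝ) : ℕ :=
  (Finset.univ.filter (fun i => z ≤ u i)).card

lemma cnt_congr {m : ℕ} (u : Fin m → ℝ) {z z' : ℝ} (h : ∀ i, z ≤ u i ↔ z' ≤ u i) :
    cnt u z = cnt u z' := by
  unfold cnt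
  congr 1
  apply Finset.filter_congr
  intro i _
  simp [h i]

/-- top discrepancy lemma -/
lemma exists_top {m : ℕ} (u v : Fin m → ℝ) (hne : ∃ z, cnt u z ≠ cnt v z) :
    ∃ z, cnt u z ≠ cnt v z ∧ ∀ z', z < z' → cnt u z' = cnt v z' := by
  classical
  set V : Finset ℝ := (Finset.univ.image u) ∪ (Finset.univ.image v) with hV
  have hmemu : ∀ i, u i ∈ V := fun i => Finset.mem_union_left _ (Finset.mem_image_of_mem u (mem_univ i))
  have hmemv : ∀ i, v i ∈ V := fun i => Finset.mem_union_right _ (Finset.mem_image_of_mem v (mem_univ i))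
  -- for any z, either cnt at z equals cnt at min of values ≥ z, or both are 0
  have key : ∀ z : ℝ, (∃ w, (w ∈ V.filter (fun w => z ≤ w)) ∧
        cnt u z = cnt u w ∧ cnt v z = cnt v w ∧ z ≤ w) ∨ (cnt u z = 0 ∧ cnt v z = 0) := by
    intro z
    rcases (V.filter (fun w => z ≤ w)).eq_empty_or_nonempty with hemp | hne'
    · right
      constructor <;>
      · rw [cnt, Finset.card_eq_zero, Finset.filter_eq_empty_iff]
        intro i _ hle
        have : (u i ∈ V.filter (fun w => z ≤ w)) ∨ (v i ∈ V.filter (fun w => z ≤ w)) := by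
          first
            | exact Or.inl (Finset.mem_filter.mpr ⟨hmemu i, hle⟩)
            | exact Or.inr (Finset.mem_filter.mpr ⟨hmemv i, hle⟩)
        rcases this with h | h <;> simp [hemp] at h
    · left
      set w0 := (V.filter (fun w => z ≤ w)).min' hne' with hw0
      have hw0mem := (V.filter (fun w => z ≤ w)).min'_mem hne'
      have hzw0 : z ≤ w0 := (Finset.mem_filter.mp hw0mem).2
      refine ⟨w0, hw0mem, ?_, ?_, hzw0⟩
      · apply cnt_congr
        intro i
        constructor
        · intro h
          exact Finset.min'_le _ _ (Finset.mem_filter.mpr ⟨hmemu i, h⟩)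
        · intro h; exact le_trans hzw0 h
      · apply cnt_congr
        intro i
        constructor
        · intro h
          exact Finset.min'_le _ _ (Finset.mem_filter.mpr ⟨hmemv i, h⟩)
        · intro h; exact le_trans hzw0 h
  -- the discrepancy set inside V
  set D : Finset ℝ := V.filter (fun w => cnt u w ≠ cnt v w) with hD
  have hDne : D.Nonempty := by
    obtain ⟨z, hz⟩ := hne
    rcases key z with ⟨w, hwmem, h1, h2, _⟩ | ⟨h1, h2⟩
    · exact ⟨w, Finset.mem_filter.mpr ⟨(Finset.mem_filter.mp hwmem).1, by rw [h1, h2] at hz; exact hz⟩⟩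
    · exact absurd (h1.trans h2.symm) hz
  set zs := D.max' hDne with hzs
  have hzsmem := D.max'_mem hDne
  refine ⟨zs, (Finset.mem_filter.mp hzsmem).2, ?_⟩
  intro z' hz'
  rcases key z' with ⟨w, hwmem, h1, h2, hzw⟩ | ⟨h1, h2⟩
  · rw [h1, h2]
    by_contra hne2
    have hwD : w ∈ D := Finset.mem_filter.mpr ⟨(Finset.mem_filter.mp hwmem).1, hne2⟩
    exact absurd (Finset.le_max' D w hwD) (not_le.mpr (lt_of_lt_of_le hz' hzw))
  · rw [h1, h2]

/-- card from counts -/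
lemma card_eq_of_counts (s t : Multiset ℝ)
    (hc : ∀ z : ℝ, (s.filter (fun a => z ≤ a)).card = (t.filter (fun a => z ≤ a)).card) :
    Multiset.card s = Multiset.card t := by
  classical
  rcases (s + t).toFinset.eq_empty_or_nonempty with hemp | hne
  · have h0 : s + t = 0 := by
      rwa [Multiset.toFinset_eq_empty] at hemp
    have hs : s = 0 := by
      rw [Multiset.eq_zero_iff_forall_notMem]
      intro a ha
      have : a ∈ s + t := Multiset.mem_add.mpr (Or.inl ha)
      rw [h0] at this
      exact absurd this (Multiset.notMem_zero a)
    have ht : t = 0 := by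
      rw [Multiset.eq_zero_iff_forall_notMem]
      intro a ha
      have : a ∈ s + t := Multiset.mem_add.mpr (Or.inr ha)
      rw [h0] at this
      exact absurd this (Multiset.notMem_zero a)
    rw [hs, ht]
  · set z := (s + t).toFinset.min' hne with hz
    have hsf : s.filter (fun a => z ≤ a) = s := by
      apply Multiset.filter_eq_self.mpr
      intro a ha
      exact Finset.min'_le _ _ (Multiset.mem_toFinset.mpr (Multiset.mem_add.mpr (Or.inl ha)))
    have htf : t.filter (fun a => z ≤ a) = t := by
      apply Multiset.filter_eq_self.mpr
      intro a ha
      exact Finset.min'_le _ _ (Multiset.mem_toFinset.mpr (Multiset.mem_add.mpr (Or.inr ha)))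
    have := hc z
    rwa [hsf, htf] at this

lemma multiset_eq_of_counts (n : ℕ) : ∀ s t : Multiset ℝ, Multiset.card s = n →
    (∀ z : ℝ, (s.filter (fun a => z ≤ a)).card = (t.filter (fun a => z ≤ a)).card) → s = t := by
  classical
  induction n with
  | zero =>
    intro s t hs hc
    have hct : Multiset.card t = 0 := (card_eq_of_counts s t hc) ▸ hs
    rw [Multiset.card_eq_zero.mp hs, Multiset.card_eq_zero.mp hct]
  | succ n ih =>
    intro s t hs hc
    have hct : Multiset.card t = n + 1 := (card_eq_of_counts s t hc) ▸ hs
    have hsne : s ≠ 0 := by intro h; rw [h] at hs; simp at hs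
    have htne : t ≠ 0 := by intro h; rw [h] at hct; simp at hct
    have hsfin : s.toFinset.Nonempty := by
      rw [← Multiset.toFinset_nonempty] at hsne; exact hsne
    have htfin : t.toFinset.Nonempty := by
      rw [← Multiset.toFinset_nonempty] at htne; exact htne
    set a := s.toFinset.max' hsfin with ha
    set b := t.toFinset.max' htfin with hb
    have has : a ∈ s := Multiset.mem_toFinset.mp (s.toFinset.max'_mem hsfin)
    have hbt : b ∈ t := Multiset.mem_toFinset.mp (t.toFinset.max'_mem htfin)
    have hab : a ≤ b := by
      have h1 : a ∈ s.filter (fun x => a ≤ x) := Multiset.mem_filter.mpr ⟨has, le_refl a⟩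
      have h2 : 0 < Multiset.card (s.filter (fun x => a ≤ x)) := Multiset.card_pos_iff_exists_mem.mpr ⟨a, h1⟩
      rw [hc a] at h2
      obtain ⟨c, hc'⟩ := Multiset.card_pos_iff_exists_mem.mp h2
      obtain ⟨hct', hac⟩ := Multiset.mem_filter.mp hc'
      exact le_trans hac (Finset.le_max' _ _ (Multiset.mem_toFinset.mpr hct'))
    have hba : b ≤ a := by
      have h1 : b ∈ t.filter (fun x => b ≤ x) := Multiset.mem_filter.mpr ⟨hbt, le_refl b⟩
      have h2 : 0 < Multiset.card (t.filter (fun x => b ≤ x)) := Multiset.card_pos_iff_exists_mem.mpr ⟨b, h1⟩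
      rw [← hc b] at h2
      obtain ⟨c, hc'⟩ := Multiset.card_pos_iff_exists_mem.mp h2
      obtain ⟨hct', hac⟩ := Multiset.mem_filter.mp hc'
      exact le_trans hac (Finset.le_max' _ _ (Multiset.mem_toFinset.mpr hct'))
    have hba' : b = a := le_antisymm hba hab
    rw [hba'] at hbt
    have key : ∀ z : ℝ, ((s.erase a).filter (fun x => z ≤ x)).card
        = ((t.erase a).filter (fun x => z ≤ x)).card := by
      intro z
      have h1 : (s.filter (fun x => z ≤ x)).card
          = (if z ≤ a then 1 else 0) + ((s.erase a).filter (fun x => z ≤ x)).card := by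
        conv_lhs => rw [← Multiset.cons_erase has]
        rw [Multiset.filter_cons]
        rw [Multiset.card_add]
        congr 1
        split <;> simp
      have h2 : (t.filter (fun x => z ≤ x)).card
          = (if z ≤ a then 1 else 0) + ((t.erase a).filter (fun x => z ≤ x)).card := by
        conv_lhs => rw [← Multiset.cons_erase hbt]
        rw [Multiset.filter_cons]
        rw [Multiset.card_add]
        congr 1
        split <;> simp
      have := hc z
      rw [h1, h2] at this
      exact Nat.add_left_cancel this
    have hcard : Multiset.card (s.erase a) = n := by
      rw [Multiset.card_erase_of_mem has, hs]; rfl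
    have := ih (s.erase a) (t.erase a) hcard key
    calc s = a ::ₘ s.erase a := (Multiset.cons_erase has).symm
    _ = a ::ₘ t.erase a := by rw [this]
    _ = t := Multiset.cons_erase hbt

lemma cnt_eq_multiset_card {m : ℕ} (u : Fin m → ℝ) (z : ℝ) :
    cnt u z = ((Finset.univ.val.map u).filter (fun a => z ≤ a)).card := by
  rw [Multiset.filter_map, Multiset.card_map]
  rfl

lemma map_eq_of_cnt {m : ℕ} (u v : Fin m → ℝ) (h : ∀ z, cnt u z = cnt v z) :
    Multiset.map u Finset.univ.val = Multiset.map v Finset.univ.val := by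
  apply multiset_eq_of_counts (Multiset.card (Multiset.map u Finset.univ.val)) _ _ rfl
  intro z
  rw [← cnt_eq_multiset_card, ← cnt_eq_multiset_card]
  exact h z

lemma sum_comp_eq {m : ℕ} {u v : Fin m → ℝ}
    (h : Multiset.map u Finset.univ.val = Multiset.map v Finset.univ.val) (φ : ℝ → ℝ) :
    ∑ i, φ (u i) = ∑ i, φ (v i) := by
  show (Finset.univ.val.map (fun i => φ (u i))).sum = (Finset.univ.val.map (fun i => φ (v i))).sum
  rw [show (fun i : Fin m => φ (u i)) = φ ∘ u from rfl,
    show (fun i : Fin m => φ (v i)) = φ ∘ v from rfl,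
    ← Multiset.map_map, ← Multiset.map_map, h]

end MidAux

theorem midpoint_precedes_incomparable {m : ℕ}
    (K : Set (Fin m → ℝ)) (hK : Convex ℝ K) (hKnn : ∀ x ∈ K, ∀ i, 0 ≤ x i)
    (lam : Fin m → ℝ) (hlam : ∀ i, 0 < lam i)
    (x y : Fin m → ℝ) (hx : x ∈ K) (hy : y ∈ K) (hxy : x ≠ y)
    (hnxy : ¬ Precedes lam x y) (hnyx : ¬ Precedes lam y x) :
    (fun i => (x i + y i) / 2) ∈ K ∧
      Precedes lam (fun i => (x i + y i) / 2) x ∧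
      Precedes lam (fun i => (x i + y i) / 2) y := by
  classical
  open MidAux in
  -- ratio functions
  set f : Fin m → ℝ := fun i => x i / lam i with hf
  set g : Fin m → ℝ := fun i => y i / lam i with hg
  set h : Fin m → ℝ := fun i => (f i + g i) / 2 with hh
  have hLx : ∀ z, levelSize lam x z = MidAux.cnt f z := fun z => rfl
  have hLy : ∀ z, levelSize lam y z = MidAux.cnt g z := fun z => rfl
  have hLm : ∀ z, levelSize lam (fun i => (x i + y i) / 2) z = MidAux.cnt h z := by
    intro z
    unfold levelSize MidAux.cnt
    congr 1
    apply Finset.filter_congr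
    intro i _
    have : (x i + y i) / 2 / lam i = h i := by
      rw [hh, hf, hg]
      simp only []
      rw [← add_div, div_right_comm]
    rw [this]
  -- membership
  have hmem : (fun i => (x i + y i) / 2) ∈ K := by
    have := hK hx hy (by norm_num : (0:ℝ) ≤ 1/2) (by norm_num : (0:ℝ) ≤ 1/2) (by norm_num)
    convert this using 1
    funext i
    simp [Pi.add_apply, Pi.smul_apply, smul_eq_mul]
    ring
  -- step 2: cnt f = cnt g everywhere
  have hfg : ∀ z, MidAux.cnt f z = MidAux.cnt g z := by
    by_contra hco
    push_neg at hco
    obtain ⟨z0, hz0, habove⟩ := MidAux.exists_top f g hco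
    rcases lt_or_gt_of_ne hz0 with hlt | hgt
    · exact hnxy ⟨z0, by rw [hLx, hLy]; exact hlt, fun z' hz' => by rw [hLx, hLy]; exact habove z' hz'⟩
    · exact hnyx ⟨z0, by rw [hLx, hLy]; exact hgt, fun z' hz' => by rw [hLx, hLy]; exact (habove z' hz').symm⟩
  have hmapfg : Multiset.map f Finset.univ.val = Multiset.map g Finset.univ.val :=
    MidAux.map_eq_of_cnt f g hfg
  -- f ≠ g pointwise somewhere
  have hfgne : ∃ i, f i ≠ g i := by
    by_contra hco
    push_neg at hco
    apply hxy
    funext i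
    have h2 : x i / lam i = y i / lam i := hco i
    field_simp [ne_of_gt (hlam i)] at h2
    exact h2
  obtain ⟨i0, hi0⟩ := hfgne
  -- step 3: cnt h differs from cnt f somewhere
  have hhf_ne : ∃ z, MidAux.cnt h z ≠ MidAux.cnt f z := by
    by_contra hco
    push_neg at hco
    have hmaphf := MidAux.map_eq_of_cnt h f hco
    have h1 : ∑ i, (h i)^2 = ∑ i, (f i)^2 := MidAux.sum_comp_eq hmaphf (fun a => a^2)
    have h2 : ∑ i, (f i)^2 = ∑ i, (g i)^2 := MidAux.sum_comp_eq hmapfg (fun a => a^2)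
    have hlt : ∑ i, (h i)^2 < ∑ i, ((f i)^2 + (g i)^2)/2 := by
      apply Finset.sum_lt_sum
      · intro i _
        have he : h i = (f i + g i)/2 := rfl
        rw [he]
        nlinarith [sq_nonneg (f i - g i)]
      · refine ⟨i0, Finset.mem_univ i0, ?_⟩
        have he : h i0 = (f i0 + g i0)/2 := rfl
        rw [he]
        have hpos : 0 < (f i0 - g i0)^2 := by
          have : f i0 - g i0 ≠ 0 := sub_ne_zero.mpr hi0
          positivity
        nlinarith
    have hsplit : ∑ i, ((f i)^2 + (g i)^2)/2 = (∑ i, (f i)^2 + ∑ i, (g i)^2)/2 := by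
      rw [← Finset.sum_add_distrib, Finset.sum_div]
    rw [hsplit, ← h2] at hlt
    linarith [h1, hlt]
  -- top discrepancy between h and f
  obtain ⟨zs, hzs_ne, hzs_ab⟩ := MidAux.exists_top h f hhf_ne
  -- truncated counts agree everywhere
  have htrunc : ∀ z, MidAux.cnt (fun i => max (h i) zs) z = MidAux.cnt (fun i => max (f i) zs) z := by
    intro z
    rcases le_or_gt z zs with hz | hz
    · unfold MidAux.cnt
      rw [Finset.filter_true_of_mem, Finset.filter_true_of_mem]
      · intro i _; exact le_trans hz (le_max_right (f i) zs)
      · intro i _; exact le_trans hz (le_max_right (h i) zs)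
    · have e1 : ∀ (u : Fin m → ℝ), MidAux.cnt (fun i => max (u i) zs) z = MidAux.cnt u z := by
        intro u
        unfold MidAux.cnt
        congr 1
        apply Finset.filter_congr
        intro i _
        simp [le_max_iff, hz.not_ge]
      rw [e1 h, e1 f]
      exact hzs_ab z hz
  have hmap_trunc := MidAux.map_eq_of_cnt _ _ htrunc
  have hsum1 : ∑ i, max (h i) zs = ∑ i, max (f i) zs :=
    MidAux.sum_comp_eq hmap_trunc (fun a => a)
  have hsum2 : ∑ i, max (f i) zs = ∑ i, max (g i) zs :=
    MidAux.sum_comp_eq hmapfg (fun a => max a zs)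
  have hpt : ∀ i ∈ Finset.univ, max (h i) zs ≤ (max (f i) zs + max (g i) zs)/2 := by
    intro i _
    have he : h i = (f i + g i)/2 := rfl
    rw [he]
    apply max_le
    · have h1 := le_max_left (f i) zs
      have h2 := le_max_left (g i) zs
      linarith
    · have h1 := le_max_right (f i) zs
      have h2 := le_max_right (g i) zs
      linarith
  have hsumeq : ∑ i, max (h i) zs = ∑ i, (max (f i) zs + max (g i) zs)/2 := by
    have hsplit : ∑ i, (max (f i) zs + max (g i) zs)/2
        = (∑ i, max (f i) zs + ∑ i, max (g i) zs)/2 := by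
      rw [← Finset.sum_add_distrib, Finset.sum_div]
    rw [hsplit, ← hsum2, hsum1]
    ring
  have hpteq := (Finset.sum_eq_sum_iff_of_le hpt).mp hsumeq
  have hsub : Finset.univ.filter (fun i => zs ≤ h i) ⊆ Finset.univ.filter (fun i => zs ≤ f i) := by
    intro i hi
    obtain ⟨-, hhi⟩ := Finset.mem_filter.mp hi
    refine Finset.mem_filter.mpr ⟨Finset.mem_univ i, ?_⟩
    by_contra hfi
    push_neg at hfi
    have hhi' : zs ≤ (f i + g i)/2 := hhi
    have hgi : zs < g i := by linarith
    have heq := hpteq i (Finset.mem_univ i)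
    have he : h i = (f i + g i)/2 := rfl
    rw [max_eq_left hhi, he, max_eq_right hfi.le, max_eq_left hgi.le] at heq
    linarith
  have hle : MidAux.cnt h zs ≤ MidAux.cnt f zs := Finset.card_le_card hsub
  have hlt : MidAux.cnt h zs < MidAux.cnt f zs := lt_of_le_of_ne hle hzs_ne
  refine ⟨hmem, ⟨zs, ?_, ?_⟩, ⟨zs, ?_, ?_⟩⟩
  · rw [hLm, hLx]; exact hlt
  · intro z' hz'; rw [hLm, hLx]; exact hzs_ab z' hz'
  · rw [hLm, hLy, ← hfg]; exact hlt
  · intro z' hz'; rw [hLm, hLy, ← hfg]; exact hzs_ab z' hz'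
end

section
/- For every nonempty compact convex set K ⊆ ℝ^m_{≥0} and positive threshold vector λ ∈ ℝ^m_{>0}, there exists a unique vector x* ∈ K such that x* ≺ y for all y ∈ K with y ≠ x*. -/
namespace LexMinAux

variable {m : ℕ}

/-- sorting permutation making ratios descending -/
noncomputable def sortPerm (lam x : Fin m → ℝ) : Equiv.Perm (Fin m) :=
  Tuple.sort (fun i => -(x i / lam i))

/-- sorted (descending) ratio vector -/
noncomputable def sv (lam x : Fin m → ℝ) (j : Fin m) : ℝ :=
  x (sortPerm lam x j) / lam (sortPerm lam x j)

lemma antitone_sv (lam x : Fin m → ℝ) : Antitone (sv lam x) := by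
  have h := Tuple.monotone_sort (fun i => -(x i / lam i))
  intro a b hab
  have := h hab
  simp only [Function.comp_apply] at this
  simp only [sv, sortPerm]
  linarith

lemma levelSize_eq (lam x : Fin m → ℝ) (z : ℝ) :
    levelSize lam x z = (Finset.univ.filter (fun j => z ≤ sv lam x j)).card := by
  unfold levelSize
  exact (Finset.card_equiv (sortPerm lam x) (fun i => by rw [Finset.mem_filter, Finset.mem_filter]; exact ⟨fun h => ⟨Finset.mem_univ _, h.2⟩, fun h => ⟨Finset.mem_univ _, h.2⟩⟩)).symm

lemma precedes_asymm (lam a b : Fin m → ℝ) (h1 : Precedes lam a b) (h2 : Precedes lam b a) :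
    False := by
  obtain ⟨z1, hz1, hz1'⟩ := h1
  obtain ⟨z2, hz2, hz2'⟩ := h2
  rcases lt_trichotomy z1 z2 with h | h | h
  · have := hz1' z2 h; omega
  · subst h; omega
  · have := hz2' z1 h; omega

lemma prec_of_lt (lam x y : Fin m → ℝ) (j0 : Fin m)
    (h1 : ∀ j < j0, sv lam x j = sv lam y j) (h2 : sv lam x j0 < sv lam y j0) :
    Precedes lam x y := by
  have hx := antitone_sv lam x
  have hy := antitone_sv lam y
  refine ⟨sv lam y j0, ?_, ?_⟩
  · rw [levelSize_eq, levelSize_eq]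
    apply Finset.card_lt_card
    constructor
    · intro j hj
      simp only [Finset.mem_filter, Finset.mem_univ, true_and] at hj ⊢
      by_cases hlt : j < j0
      · rw [← h1 j hlt]
        exact hj
      · exfalso
        have : sv lam x j ≤ sv lam x j0 := hx (not_lt.mp hlt)
        linarith
    · intro hsub
      have hj0 : j0 ∈ Finset.univ.filter (fun j => sv lam y j0 ≤ sv lam y j) := by simp
      have := hsub hj0
      simp only [Finset.mem_filter, Finset.mem_univ, true_and] at this
      linarith
  · intro z' hz'
    rw [levelSize_eq, levelSize_eq]
    congr 1
    apply Finset.filter_congr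
    intro j _
    by_cases hlt : j < j0
    · rw [h1 j hlt]
    · have hxj : sv lam x j ≤ sv lam x j0 := hx (not_lt.mp hlt)
      have hyj : sv lam y j ≤ sv lam y j0 := hy (not_lt.mp hlt)
      constructor <;> intro hh <;> linarith


/-- prefix sum of sorted ratios -/
noncomputable def pkk (g : Fin m → ℝ) (k : ℕ) : ℝ :=
  ∑ j ∈ Finset.univ.filter (fun j : Fin m => (j : ℕ) < k), g j

lemma filter_lt_succ {k : ℕ} (hk : k < m) :
    Finset.univ.filter (fun j : Fin m => (j : ℕ) < k + 1) =
      insert ⟨k, hk⟩ (Finset.univ.filter (fun j : Fin m => (j : ℕ) < k)) := by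
  ext j
  simp only [Finset.mem_filter, Finset.mem_univ, true_and, Finset.mem_insert, Fin.ext_iff]
  omega

lemma pkk_succ (g : Fin m → ℝ) {k : ℕ} (hk : k < m) :
    pkk g (k + 1) = pkk g k + g ⟨k, hk⟩ := by
  unfold pkk
  rw [filter_lt_succ hk, Finset.sum_insert (by simp)]
  ring

lemma pkk_zero (g : Fin m → ℝ) : pkk g 0 = 0 := by simp [pkk]

lemma card_filter_lt {k : ℕ} (hk : k ≤ m) :
    (Finset.univ.filter (fun j : Fin m => (j : ℕ) < k)).card = k := by
  induction k with
  | zero => simp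
  | succ k ih =>
    rw [filter_lt_succ (by omega), Finset.card_insert_of_notMem (by simp)]
    rw [ih (by omega)]

lemma strictMono_le_apply {k : ℕ} (f : Fin k → Fin m) (hf : StrictMono f) (j : Fin k) :
    (j : ℕ) ≤ (f j : ℕ) := by
  suffices H : ∀ n : ℕ, ∀ j : Fin k, (j : ℕ) = n → n ≤ (f j : ℕ) from H _ j rfl
  intro n
  induction n with
  | zero => omega
  | succ n ih =>
    intro j hj
    have hn' : n < k := by omega
    have h1 := ih ⟨n, hn'⟩ rfl
    have hlt := hf (show (⟨n, hn'⟩ : Fin k) < j by rw [Fin.lt_def]; simp [hj])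
    rw [Fin.lt_def] at hlt
    omega

lemma sum_antitone_le (g : Fin m → ℝ) (hg : Antitone g) (P : Finset (Fin m)) :
    ∑ p ∈ P, g p ≤ pkk g P.card := by
  set k := P.card with hkdef
  have hcast : ∀ j : Fin k, (j : ℕ) < m := fun j =>
    lt_of_le_of_lt (strictMono_le_apply _ (P.orderEmbOfFin hkdef.symm).strictMono j)
      (Fin.isLt _)
  have step1 : ∑ p ∈ P, g p = ∑ j : Fin k, g ((P.orderEmbOfFin hkdef.symm) j) := by
    refine (Finset.sum_nbij (fun j => (P.orderEmbOfFin hkdef.symm) j) ?_ ?_ ?_ ?_).symm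
    · intro j _
      exact Finset.orderEmbOfFin_mem _ _ _
    · intro a _ b _ h
      exact (P.orderEmbOfFin hkdef.symm).injective h
    · intro i hi
      have : i ∈ Set.range (P.orderEmbOfFin hkdef.symm) := by
        rw [Finset.range_orderEmbOfFin]; exact hi
      obtain ⟨j, hj⟩ := this
      exact ⟨j, by simp, hj⟩
    · intro j _
      rfl
  have step2 : ∑ j : Fin k, g ((P.orderEmbOfFin hkdef.symm) j)
      ≤ ∑ j : Fin k, g ⟨(j : ℕ), hcast j⟩ := by
    apply Finset.sum_le_sum
    intro j _
    apply hg
    rw [Fin.le_def]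
    exact strictMono_le_apply _ (P.orderEmbOfFin hkdef.symm).strictMono j
  have step3 : ∑ j : Fin k, g ⟨(j : ℕ), hcast j⟩ = pkk g k := by
    unfold pkk
    rw [show Finset.univ.filter (fun j : Fin m => (j : ℕ) < k) =
        Finset.univ.map ⟨fun j : Fin k => ⟨(j : ℕ), hcast j⟩,
          fun a b h => by simpa [Fin.ext_iff] using h⟩ from ?_]
    · rw [Finset.sum_map]; rfl
    · ext i
      simp only [Finset.mem_filter, Finset.mem_univ, true_and, Finset.mem_map,
        Function.Embedding.coeFn_mk]
      constructor
      · intro hi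
        exact ⟨⟨(i : ℕ), hi⟩, rfl⟩
      · rintro ⟨j, rfl⟩
        exact j.isLt
  rw [step1]
  exact le_of_le_of_eq step2 step3

lemma continuous_sup' {ι : Type*} (s : Finset ι) (hs : s.Nonempty)
    (f : ι → (Fin m → ℝ) → ℝ) (hf : ∀ i ∈ s, Continuous (f i)) :
    Continuous (fun x => s.sup' hs fun i => f i x) := by
  revert hf
  induction hs using Finset.Nonempty.cons_induction with
  | singleton a =>
    intro hf
    have : (fun x => ({a} : Finset ι).sup' (Finset.singleton_nonempty a) fun i => f i x) = f a := by
      funext x; simp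
    rw [this]
    exact hf a (Finset.mem_singleton_self a)
  | cons a s ha hs ih =>
    intro hf
    have : (fun x => (Finset.cons a s ha).sup' (Finset.cons_nonempty ha) fun i => f i x)
        = fun x => (f a x) ⊔ (s.sup' hs fun i => f i x) := by
      funext x; exact Finset.sup'_cons hs (f := fun i => f i x) (α := ℝ)
    rw [this]
    exact (hf a (Finset.mem_cons_self a s)).sup
      (ih fun i hi => hf i (Finset.mem_cons_of_mem hi))



/-- prefix sum of sorted ratios -/
noncomputable def pk (lam x : Fin m → ℝ) (k : ℕ) : ℝ := pkk (sv lam x) k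

lemma sum_ratio_le_pk (lam x : Fin m → ℝ) (P : Finset (Fin m)) :
    ∑ i ∈ P, x i / lam i ≤ pk lam x P.card := by
  have h : ∑ i ∈ P, x i / lam i = ∑ q ∈ P.image (sortPerm lam x).symm, sv lam x q := by
    rw [Finset.sum_image (fun a _ b _ h => (Equiv.injective _) h)]
    apply Finset.sum_congr rfl
    intro i _
    simp [sv]
  have hcard : (P.image (sortPerm lam x).symm).card = P.card :=
    Finset.card_image_of_injective _ (Equiv.injective _)
  rw [h, ← hcard]
  exact sum_antitone_le _ (antitone_sv lam x) _

lemma pk_eq_sum (lam x : Fin m → ℝ) {k : ℕ} (hk : k ≤ m) :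
    ∃ S : Finset (Fin m), S.card = k ∧ pk lam x k = ∑ i ∈ S, x i / lam i := by
  refine ⟨(Finset.univ.filter (fun j : Fin m => (j : ℕ) < k)).image (sortPerm lam x), ?_, ?_⟩
  · rw [Finset.card_image_of_injective _ (Equiv.injective _), card_filter_lt hk]
  · rw [Finset.sum_image (fun a _ b _ h => (Equiv.injective _) h)]
    rfl

lemma pk_sup' (lam x : Fin m → ℝ) {k : ℕ} (hk : k ≤ m) :
    pk lam x k = (Finset.powersetCard k (Finset.univ : Finset (Fin m))).sup'
      (Finset.powersetCard_nonempty.2 (by simpa using hk))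
      (fun S => ∑ i ∈ S, x i / lam i) := by
  apply le_antisymm
  · obtain ⟨S, hScard, hSsum⟩ := pk_eq_sum lam x hk
    rw [hSsum]
    exact Finset.le_sup' (fun S => ∑ i ∈ S, x i / lam i)
      (Finset.mem_powersetCard.2 ⟨Finset.subset_univ _, hScard⟩)
  · apply Finset.sup'_le
    intro S hS
    obtain ⟨-, hcard⟩ := Finset.mem_powersetCard.1 hS
    rw [← hcard]
    exact sum_ratio_le_pk lam x S

lemma pk_stable (lam x : Fin m → ℝ) {k : ℕ} (hk : m ≤ k) : pk lam x k = pk lam x m := by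
  unfold pk pkk
  apply Finset.sum_congr _ (fun _ _ => rfl)
  apply Finset.filter_congr
  intro j _
  have := j.isLt
  constructor <;> intro <;> omega

lemma continuous_pk (lam : Fin m → ℝ) (k : ℕ) :
    Continuous (fun x : Fin m → ℝ => pk lam x k) := by
  have base : ∀ k' : ℕ, k' ≤ m → Continuous (fun x : Fin m → ℝ => pk lam x k') := by
    intro k' hk'
    have : (fun x : Fin m → ℝ => pk lam x k') =
        fun x => (Finset.powersetCard k' (Finset.univ : Finset (Fin m))).sup'
          (Finset.powersetCard_nonempty.2 (by simpa using hk'))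
          (fun S => ∑ i ∈ S, x i / lam i) := by
      funext x; exact pk_sup' lam x hk'
    rw [this]
    apply continuous_sup'
    intro S _
    apply continuous_finset_sum
    intro i _
    exact (continuous_apply i).div_const _
  rcases le_or_gt k m with hk | hk
  · exact base k hk
  · have : (fun x : Fin m → ℝ => pk lam x k) = fun x => pk lam x m := by
      funext x; exact pk_stable lam x hk.le
    rw [this]
    exact base m le_rfl

noncomputable def chain (lam : Fin m → ℝ) (K : Set (Fin m → ℝ)) : ℕ → Set (Fin m → ℝ)
  | 0 => K
  | (k+1) => {x ∈ chain lam K k | ∀ y ∈ chain lam K k, pk lam x (k+1) ≤ pk lam y (k+1)}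

lemma mem_chain_succ_iff {lam : Fin m → ℝ} {K : Set (Fin m → ℝ)} {k : ℕ} {x : Fin m → ℝ} :
    x ∈ chain lam K (k+1) ↔ x ∈ chain lam K k ∧
      ∀ y ∈ chain lam K k, pk lam x (k+1) ≤ pk lam y (k+1) := Iff.rfl

lemma chain_anti {lam : Fin m → ℝ} {K : Set (Fin m → ℝ)} {k l : ℕ} (h : k ≤ l) :
    chain lam K l ⊆ chain lam K k := by
  induction l with
  | zero => rw [Nat.le_zero.mp h]
  | succ n ih =>
    rcases Nat.lt_or_ge k (n+1) with hlt | hge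
    · exact fun x hx => ih (by omega) (mem_chain_succ_iff.mp hx).1
    · rw [le_antisymm h hge]

lemma chain_subset_K {lam : Fin m → ℝ} {K : Set (Fin m → ℝ)} (k : ℕ) :
    chain lam K k ⊆ K := chain_anti (Nat.zero_le k)

lemma chain_compact_nonempty {lam : Fin m → ℝ} {K : Set (Fin m → ℝ)}
    (hKc : IsCompact K) (hKne : K.Nonempty) (k : ℕ) :
    IsCompact (chain lam K k) ∧ (chain lam K k).Nonempty := by
  induction k with
  | zero => exact ⟨hKc, hKne⟩
  | succ k ih =>
    obtain ⟨hc, hne⟩ := ih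
    have hcont := continuous_pk lam (m := m) (k+1)
    obtain ⟨x0, hx0, hmin⟩ := hc.exists_isMinOn hne hcont.continuousOn
    constructor
    · have heq : chain lam K (k+1) =
          chain lam K k ∩ ⋂ y ∈ chain lam K k, {x | pk lam x (k+1) ≤ pk lam y (k+1)} := by
        ext w
        simp only [mem_chain_succ_iff, Set.mem_inter_iff, Set.mem_iInter, Set.mem_setOf_eq]
      rw [heq]
      exact hc.inter_right (isClosed_biInter (fun y _ => isClosed_le hcont continuous_const))
    · exact ⟨x0, mem_chain_succ_iff.mpr ⟨hx0, fun y hy => isMinOn_iff.mp hmin y hy⟩⟩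

lemma pk_eq_on_chain {lam : Fin m → ℝ} {K : Set (Fin m → ℝ)} {k : ℕ} {x y : Fin m → ℝ}
    (hx : x ∈ chain lam K k) (hy : y ∈ chain lam K k) :
    pk lam x k = pk lam y k := by
  cases k with
  | zero => simp [pk, pkk_zero]
  | succ n =>
    exact le_antisymm ((mem_chain_succ_iff.mp hx).2 y (mem_chain_succ_iff.mp hy).1)
      ((mem_chain_succ_iff.mp hy).2 x (mem_chain_succ_iff.mp hx).1)

lemma sv_eq_pk_diff (lam x : Fin m → ℝ) (j : Fin m) :
    sv lam x j = pk lam x ((j : ℕ) + 1) - pk lam x (j : ℕ) := by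
  have h := pkk_succ (sv lam x) j.isLt
  unfold pk
  rw [h, Fin.eta]
  ring

lemma key {lam : Fin m → ℝ} {K : Set (Fin m → ℝ)} {xs : Fin m → ℝ}
    (hxs : xs ∈ chain lam K m) {y : Fin m → ℝ} (hy : y ∈ K) :
    sv lam xs = sv lam y ∨ ∃ j0 : Fin m,
      (∀ j < j0, sv lam xs j = sv lam y j) ∧ sv lam xs j0 < sv lam y j0 := by
  classical
  by_cases hym : y ∈ chain lam K m
  · left
    funext j
    have hpk : ∀ i, i ≤ m → pk lam xs i = pk lam y i := fun i hi =>
      pk_eq_on_chain (chain_anti hi hxs) (chain_anti hi hym)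
    rw [sv_eq_pk_diff, sv_eq_pk_diff, hpk _ j.isLt, hpk _ (le_of_lt j.isLt)]
  · right
    have hexists : ∃ k, y ∉ chain lam K (k+1) := by
      cases m with
      | zero => exact absurd hy hym
      | succ n => exact ⟨n, hym⟩
    have hk1 : y ∉ chain lam K (Nat.find hexists + 1) := Nat.find_spec hexists
    set k := Nat.find hexists with hkdef
    have hkmem : ∀ i ≤ k, y ∈ chain lam K i := by
      intro i hi
      cases i with
      | zero => exact hy
      | succ n =>
        have := Nat.find_min hexists (show n < Nat.find hexists by omega)
        exact not_not.mp this
    have hkm : k < m := by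
      by_contra h
      push_neg at h
      exact hym (chain_anti h (hkmem k le_rfl))
    have hpk : ∀ i, i ≤ k → pk lam xs i = pk lam y i := fun i hi =>
      pk_eq_on_chain (chain_anti (le_trans hi hkm.le) hxs) (chain_anti le_rfl (hkmem i hi))
    have hnot : ¬ (∀ z ∈ chain lam K k, pk lam y (k+1) ≤ pk lam z (k+1)) := by
      intro hcon
      exact hk1 (mem_chain_succ_iff.mpr ⟨hkmem k le_rfl, hcon⟩)
    push_neg at hnot
    obtain ⟨z, hz, hzlt⟩ := hnot
    have hxsk1 : xs ∈ chain lam K (k+1) := chain_anti (by omega) hxs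
    have hlt : pk lam xs (k+1) < pk lam y (k+1) :=
      lt_of_le_of_lt ((mem_chain_succ_iff.mp hxsk1).2 z hz) hzlt
    refine ⟨⟨k, hkm⟩, ?_, ?_⟩
    · intro j hj
      have hjk : (j : ℕ) < k := hj
      rw [sv_eq_pk_diff, sv_eq_pk_diff, hpk _ (by omega), hpk _ (by omega)]
    · rw [sv_eq_pk_diff, sv_eq_pk_diff]
      have h0 := hpk k le_rfl
      simp only
      linarith

lemma pk_mid {lam : Fin m → ℝ} (x y : Fin m → ℝ) {k : ℕ} (hk : k ≤ m) :
    pk lam ((1/2 : ℝ) • x + (1/2 : ℝ) • y) k ≤ (pk lam x k + pk lam y k) / 2 := by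
  obtain ⟨S, hScard, hSsum⟩ := pk_eq_sum lam ((1/2 : ℝ) • x + (1/2 : ℝ) • y) hk
  rw [hSsum]
  have heq : ∑ i ∈ S, ((1/2 : ℝ) • x + (1/2 : ℝ) • y) i / lam i
      = (∑ i ∈ S, x i / lam i + ∑ i ∈ S, y i / lam i) / 2 := by
    rw [← Finset.sum_add_distrib, Finset.sum_div]
    apply Finset.sum_congr rfl
    intro i _
    simp only [Pi.add_apply, Pi.smul_apply, smul_eq_mul]
    ring
  rw [heq]
  have h1 := sum_ratio_le_pk lam x S
  have h2 := sum_ratio_le_pk lam y S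
  rw [hScard] at h1 h2
  linarith

lemma sum_sq_sv (lam x : Fin m → ℝ) :
    ∑ j, (sv lam x j)^2 = ∑ i, (x i / lam i)^2 := by
  have := Equiv.sum_comp (sortPerm lam x) (fun i => (x i / lam i)^2)
  simpa [sv] using this

lemma pk_congr_sv {lam x y : Fin m → ℝ} (h : sv lam x = sv lam y) (k : ℕ) :
    pk lam x k = pk lam y k := by
  unfold pk pkk
  rw [h]

end LexMinAux


theorem exists_unique_lexmin {m : ℕ}
    (K : Set (Fin m → ℝ)) (hK : Convex ℝ K) (hKc : IsCompact K)
    (hKne : K.Nonempty) (hKnn : ∀ x ∈ K, ∀ i, 0 ≤ x i)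
    (lam : Fin m → ℝ) (hlam : ∀ i, 0 < lam i) :
    ∃! xs : Fin m → ℝ, xs ∈ K ∧ ∀ y ∈ K, y ≠ xs → Precedes lam xs y := by
  classical
  obtain ⟨xs, hxs⟩ := (LexMinAux.chain_compact_nonempty (lam := lam) hKc hKne m).2
  have hxsK : xs ∈ K := LexMinAux.chain_subset_K m hxs
  have hprop : ∀ y ∈ K, y ≠ xs → Precedes lam xs y := by
    intro y hy hne'
    rcases LexMinAux.key hxs hy with heq | ⟨j0, h1, h2⟩
    · exfalso
      have hmidK : ((1/2 : ℝ) • xs + (1/2 : ℝ) • y) ∈ K :=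
        hK hxsK hy (by norm_num) (by norm_num) (by norm_num)
      rcases LexMinAux.key hxs hmidK with heq2 | ⟨j0, h1, h2⟩
      · -- sum of squares forces xs = y
        apply hne'
        have s1 := LexMinAux.sum_sq_sv lam xs
        have s2 := LexMinAux.sum_sq_sv lam y
        have s3 := LexMinAux.sum_sq_sv lam ((1/2 : ℝ) • xs + (1/2 : ℝ) • y)
        have e1 : ∑ i, (xs i / lam i)^2 = ∑ i, (y i / lam i)^2 := by
          rw [← s1, ← s2, heq]
        have e2 : ∑ i, (xs i / lam i)^2
            = ∑ i, (((1/2 : ℝ) • xs + (1/2 : ℝ) • y) i / lam i)^2 := by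
          rw [← s1, ← s3, heq2]
        have hzero : ∑ i, (xs i / lam i - y i / lam i)^2 = 0 := by
          have expand : ∀ i : Fin m, (xs i / lam i - y i / lam i)^2
              = 2*(xs i / lam i)^2 + 2*(y i / lam i)^2
                - 4*((((1/2 : ℝ) • xs + (1/2 : ℝ) • y) i) / lam i)^2 := by
            intro i
            have hmidi : (((1/2 : ℝ) • xs + (1/2 : ℝ) • y) i) / lam i
                = (xs i / lam i + y i / lam i) / 2 := by
              simp only [Pi.add_apply, Pi.smul_apply, smul_eq_mul]
              ring
            rw [hmidi]
            ring
          rw [Finset.sum_congr rfl (fun i _ => expand i)]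
          have hsplit : ∑ i : Fin m, (2*(xs i / lam i)^2 + 2*(y i / lam i)^2
              - 4*((((1/2 : ℝ) • xs + (1/2 : ℝ) • y) i) / lam i)^2)
              = 2*(∑ i, (xs i / lam i)^2) + 2*(∑ i, (y i / lam i)^2)
                - 4*(∑ i, ((((1/2 : ℝ) • xs + (1/2 : ℝ) • y) i) / lam i)^2) := by
            rw [Finset.sum_sub_distrib, Finset.sum_add_distrib,
              ← Finset.mul_sum, ← Finset.mul_sum, ← Finset.mul_sum]
          rw [hsplit]
          linarith
        funext i
        have hterm := (Finset.sum_eq_zero_iff_of_nonneg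
          (fun i _ => sq_nonneg _)).mp hzero i (Finset.mem_univ i)
        have hsub : xs i / lam i - y i / lam i = 0 :=
          pow_eq_zero_iff (by norm_num) |>.mp hterm
        have hdiv : xs i / lam i = y i / lam i := by linarith
        rw [div_eq_div_iff (hlam i).ne' (hlam i).ne'] at hdiv
        exact (mul_right_cancel₀ (hlam i).ne' hdiv).symm
      · -- lexicographic improvement by midpoint: contradiction
        have hk1 : (j0 : ℕ) + 1 ≤ m := j0.isLt
        have hmle := LexMinAux.pk_mid (lam := lam) xs y hk1
        have hpy : LexMinAux.pk lam xs ((j0 : ℕ)+1) = LexMinAux.pk lam y ((j0 : ℕ)+1) :=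
          LexMinAux.pk_congr_sv heq _
        have hpj0 : LexMinAux.pk lam xs (j0 : ℕ)
            = LexMinAux.pk lam ((1/2 : ℝ) • xs + (1/2 : ℝ) • y) (j0 : ℕ) := by
          unfold LexMinAux.pk LexMinAux.pkk
          apply Finset.sum_congr rfl
          intro j hj
          simp only [Finset.mem_filter, Finset.mem_univ, true_and] at hj
          exact h1 j hj
        have hsx := LexMinAux.sv_eq_pk_diff lam xs j0
        have hsm := LexMinAux.sv_eq_pk_diff lam ((1/2 : ℝ) • xs + (1/2 : ℝ) • y) j0
        linarith
    · exact LexMinAux.prec_of_lt lam xs y j0 h1 h2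
  refine ⟨xs, ⟨hxsK, hprop⟩, ?_⟩
  rintro y ⟨hyK, hyprec⟩
  by_contra hne'
  exact LexMinAux.precedes_asymm lam xs y (hprop y hyK hne')
    (hyprec xs hxsK (fun h => hne' h.symm))
end

section
/- If x ≺ y fails and y ≺ x fails for x ≠ y in K, and the sorted (nonincreasing) rearrangement of r((x+y)/2) is compared with that of r(x), then the sorted vector of r((x+y)/2) is strictly smaller in lexicographic order than the sorted vector of r(x). -/
/-- The ratios `x i / lam i`, sorted in nonincreasing order. -/
noncomputable def sortedRatiosDesc {m : ℕ} (lam x : Fin m → ℝ) : List ℝ :=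
  ((Finset.univ.val.map (fun i => x i / lam i)).sort (· ≤ ·)).reverse

/-! ### Auxiliary machinery -/

/-- Number of entries of `s` that are at least `z`. -/
noncomputable def auxCnt (z : ℝ) (s : Multiset ℝ) : ℕ :=
  Multiset.countP (fun v => z ≤ v) s

lemma auxLevel {m : ℕ} (lam x : Fin m → ℝ) (z : ℝ) :
    levelSize lam x z = auxCnt z ↑(sortedRatiosDesc lam x) := by
  rw [levelSize, sortedRatiosDesc, auxCnt, Multiset.coe_reverse, Multiset.sort_eq,
    Multiset.countP_map, Finset.card_def, Finset.filter_val]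

lemma auxSorted {m : ℕ} (lam x : Fin m → ℝ) :
    (sortedRatiosDesc lam x).Pairwise (· ≥ ·) := by
  rw [sortedRatiosDesc, List.pairwise_reverse]
  exact Multiset.pairwise_sort _ (· ≤ ·)

lemma auxLen {m : ℕ} (lam x : Fin m → ℝ) :
    (sortedRatiosDesc lam x).length = m := by
  rw [sortedRatiosDesc, List.length_reverse, Multiset.length_sort, Multiset.card_map]
  simp

lemma auxSortedGet : ∀ (L : List ℝ), L.Pairwise (· ≥ ·) →
    ∀ (k : ℕ) (hk : k < L.length) (z : ℝ),
      (z ≤ L.get ⟨k, hk⟩ ↔ k < auxCnt z ↑L) := by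
  intro L
  induction L with
  | nil => intro _ k hk; simp at hk
  | cons a t ih =>
    intro hs k hk z
    rw [List.pairwise_cons] at hs
    have hcnt : auxCnt z ↑(a :: t) = auxCnt z ↑t + if z ≤ a then 1 else 0 := by
      show Multiset.countP _ (a ::ₘ (↑t : Multiset ℝ)) = _
      rw [Multiset.countP_cons]
      rfl
    have ht0 : ¬ z ≤ a → auxCnt z ↑t = 0 := by
      intro hza
      apply Multiset.countP_eq_zero.mpr
      intro b hb
      have hba : b ≤ a := hs.1 b (by exact_mod_cast hb)
      exact fun hzb => hza (le_trans hzb hba)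
    cases k with
    | zero =>
      show z ≤ a ↔ _
      rw [hcnt]
      constructor
      · intro h; rw [if_pos h]; omega
      · intro h
        by_contra hza
        rw [if_neg hza] at h
        have := ht0 hza
        omega
    | succ k =>
      have hk' : k < t.length := by simpa using hk
      have hiht := ih hs.2 k hk' z
      show z ≤ t.get ⟨k, hk'⟩ ↔ _
      rw [hcnt, hiht]
      by_cases hza : z ≤ a
      · rw [if_pos hza]; omega
      · rw [if_neg hza]
        have := ht0 hza
        omega

lemma auxLex : ∀ (k : ℕ) (l1 l2 : List ℝ),
    (∀ i (hi : i < k) (h1 : i < l1.length) (h2 : i < l2.length),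
        l1.get ⟨i, h1⟩ = l2.get ⟨i, h2⟩) →
    ∀ (h1 : k < l1.length) (h2 : k < l2.length),
      l1.get ⟨k, h1⟩ < l2.get ⟨k, h2⟩ → List.Lex (· < ·) l1 l2 := by
  intro k
  induction k with
  | zero =>
    intro l1 l2 _ h1 h2 hlt
    match l1, l2, h1, h2, hlt with
    | a :: t1, b :: t2, _, _, hlt => exact List.Lex.rel hlt
  | succ k ih =>
    intro l1 l2 hpre h1 h2 hlt
    match l1, l2, hpre, h1, h2, hlt with
    | a :: t1, b :: t2, hpre, h1, h2, hlt =>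
      have hab : a = b := hpre 0 (Nat.succ_pos k) (by simp) (by simp)
      subst hab
      refine List.Lex.cons (ih t1 t2 ?_ (by simpa using h1) (by simpa using h2) hlt)
      intro i hi hi1 hi2
      exact hpre (i + 1) (by omega) (by simpa using hi1) (by simpa using hi2)

theorem midpoint_sorted_lex_lt {m : ℕ}
    (K : Set (Fin m → ℝ)) (hK : Convex ℝ K) (hKnn : ∀ x ∈ K, ∀ i, 0 ≤ x i)
    (lam : Fin m → ℝ) (hlam : ∀ i, 0 < lam i)
    (x y : Fin m → ℝ) (hx : x ∈ K) (hy : y ∈ K) (hxy : x ≠ y)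
    (hnxy : ¬ Precedes lam x y) (hnyx : ¬ Precedes lam y x) :
    List.Lex (· < ·) (sortedRatiosDesc lam (fun i => (x i + y i) / 2))
      (sortedRatiosDesc lam x) := by
  classical
  set rx : Fin m → ℝ := fun i => x i / lam i with hrx
  set ry : Fin m → ℝ := fun i => y i / lam i with hry
  set mid : Fin m → ℝ := fun i => (x i + y i) / 2 with hmid
  have hrc : ∀ i, mid i / lam i = (rx i + ry i) / 2 := by
    intro i
    show ((x i + y i) / 2) / lam i = (x i / lam i + y i / lam i) / 2
    rw [← add_div, div_div, div_div, mul_comm]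
  -- the finite set of all ratio values
  set W : Finset ℝ := (Finset.univ.image rx) ∪ (Finset.univ.image ry) with hW
  have hxW : ∀ i, rx i ∈ W := fun i => Finset.mem_union_left _ (Finset.mem_image_of_mem rx (Finset.mem_univ i))
  have hyW : ∀ i, ry i ∈ W := fun i => Finset.mem_union_right _ (Finset.mem_image_of_mem ry (Finset.mem_univ i))
  -- reduction: levelSize at any z equals levelSize at the least value of W at least z
  have hred : ∀ (r : Fin m → ℝ), (∀ i, r i / lam i ∈ W) → ∀ z : ℝ,
      ∀ (hne : (W.filter (fun v => z ≤ v)).Nonempty),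
        levelSize lam r z = levelSize lam r ((W.filter (fun v => z ≤ v)).min' hne) := by
    intro r hrW z hne
    have hzu : z ≤ (W.filter (fun v => z ≤ v)).min' hne := by
      have := (W.filter (fun v => z ≤ v)).min'_mem hne
      exact (Finset.mem_filter.mp this).2
    unfold levelSize
    congr 1
    apply Finset.filter_congr
    intro i _
    constructor
    · intro h
      exact Finset.min'_le _ _ (Finset.mem_filter.mpr ⟨hrW i, h⟩)
    · intro h
      exact le_trans hzu h
  have hzero : ∀ (r : Fin m → ℝ), (∀ i, r i / lam i ∈ W) → ∀ z : ℝ,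
      ¬ (W.filter (fun v => z ≤ v)).Nonempty → levelSize lam r z = 0 := by
    intro r hrW z hne
    unfold levelSize
    rw [Finset.card_eq_zero, Finset.filter_eq_empty_iff]
    intro i _
    intro h
    exact hne ⟨_, Finset.mem_filter.mpr ⟨hrW i, h⟩⟩
  have hxrW : ∀ i, x i / lam i ∈ W := hxW
  have hyrW : ∀ i, y i / lam i ∈ W := hyW
  -- Step A: level sizes of x and y agree everywhere
  have hA : ∀ z : ℝ, levelSize lam x z = levelSize lam y z := by
    by_contra hcon
    push_neg at hcon
    obtain ⟨z0, hz0⟩ := hcon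
    set D : Finset ℝ := W.filter (fun v => levelSize lam x v ≠ levelSize lam y v) with hD
    have hDne : D.Nonempty := by
      by_cases h : (W.filter (fun v => z0 ≤ v)).Nonempty
      · refine ⟨(W.filter (fun v => z0 ≤ v)).min' h, Finset.mem_filter.mpr ⟨?_, ?_⟩⟩
        · exact (Finset.mem_filter.mp ((W.filter (fun v => z0 ≤ v)).min'_mem h)).1
        · rw [← hred x hxrW z0 h, ← hred y hyrW z0 h]
          exact hz0
      · exact absurd (by rw [hzero x hxrW z0 h, hzero y hyrW z0 h]) hz0
    set T := D.max' hDne with hT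
    have hTmem := D.max'_mem hDne
    have hTne : levelSize lam x T ≠ levelSize lam y T := (Finset.mem_filter.mp hTmem).2
    have hTeq : ∀ z' : ℝ, T < z' → levelSize lam x z' = levelSize lam y z' := by
      intro z' hz'
      by_cases h : (W.filter (fun v => z' ≤ v)).Nonempty
      · rw [hred x hxrW z' h, hred y hyrW z' h]
        by_contra hne2
        have hmem : (W.filter (fun v => z' ≤ v)).min' h ∈ D := by
          refine Finset.mem_filter.mpr ⟨(Finset.mem_filter.mp ((W.filter (fun v => z' ≤ v)).min'_mem h)).1, hne2⟩
        have h1 : (W.filter (fun v => z' ≤ v)).min' h ≤ T := Finset.le_max' _ _ hmem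
        have h2 : z' ≤ (W.filter (fun v => z' ≤ v)).min' h :=
          (Finset.mem_filter.mp ((W.filter (fun v => z' ≤ v)).min'_mem h)).2
        linarith
      · rw [hzero x hxrW z' h, hzero y hyrW z' h]
    rcases lt_or_gt_of_ne hTne with h | h
    · exact hnxy ⟨T, h, hTeq⟩
    · exact hnyx ⟨T, h, fun z' hz' => (hTeq z' hz').symm⟩
  -- Step B: per-value counts agree
  have hB : ∀ T : ℝ, (Finset.univ.filter (fun i => rx i = T)).card
      = (Finset.univ.filter (fun i => ry i = T)).card := by
    intro T
    have hgt : (Finset.univ.filter (fun i => T < rx i)).card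
        = (Finset.univ.filter (fun i => T < ry i)).card := by
      by_cases h : (W.filter (fun v => T < v)).Nonempty
      · set u := (W.filter (fun v => T < v)).min' h with hu
        have huW := (W.filter (fun v => T < v)).min'_mem h
        have hTu : T < u := (Finset.mem_filter.mp huW).2
        have hx' : Finset.univ.filter (fun i => T < rx i) = Finset.univ.filter (fun i => u ≤ rx i) := by
          apply Finset.filter_congr
          intro i _
          constructor
          · intro hi; exact Finset.min'_le _ _ (Finset.mem_filter.mpr ⟨hxW i, hi⟩)
          · intro hi; exact lt_of_lt_of_le hTu hi
        have hy' : Finset.univ.filter (fun i => T < ry i) = Finset.univ.filter (fun i => u ≤ ry i) := by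
          apply Finset.filter_congr
          intro i _
          constructor
          · intro hi; exact Finset.min'_le _ _ (Finset.mem_filter.mpr ⟨hyW i, hi⟩)
          · intro hi; exact lt_of_lt_of_le hTu hi
        rw [hx', hy']
        exact hA u
      · have hx0 : Finset.univ.filter (fun i => T < rx i) = ∅ := by
          rw [Finset.filter_eq_empty_iff]
          intro i _ hi
          exact h ⟨_, Finset.mem_filter.mpr ⟨hxW i, hi⟩⟩
        have hy0 : Finset.univ.filter (fun i => T < ry i) = ∅ := by
          rw [Finset.filter_eq_empty_iff]
          intro i _ hi
          exact h ⟨_, Finset.mem_filter.mpr ⟨hyW i, hi⟩⟩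
        rw [hx0, hy0]
    have hsplit : ∀ (r : Fin m → ℝ),
        (Finset.univ.filter (fun i => T ≤ r i)).card
          = (Finset.univ.filter (fun i => r i = T)).card
            + (Finset.univ.filter (fun i => T < r i)).card := by
      intro r
      rw [← Finset.card_union_of_disjoint]
      · congr 1
        ext i
        simp only [Finset.mem_filter, Finset.mem_union, Finset.mem_univ, true_and]
        constructor
        · intro h
          rcases eq_or_lt_of_le h with h' | h'
          · exact Or.inl h'.symm
          · exact Or.inr h'
        · rintro (h | h)
          · exact le_of_eq h.symm
          · exact le_of_lt h
      · rw [Finset.disjoint_filter]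
        intro i _ h1 h2
        exact absurd h1 (ne_of_gt h2)
    have h1 := hsplit rx
    have h2 := hsplit ry
    have h3 : (Finset.univ.filter (fun i => T ≤ rx i)).card
        = (Finset.univ.filter (fun i => T ≤ ry i)).card := hA T
    omega
  -- the set of differing indices
  set Df : Finset (Fin m) := Finset.univ.filter (fun i => rx i ≠ ry i) with hDf
  have hDfne : Df.Nonempty := by
    obtain ⟨i, hi⟩ := Function.ne_iff.mp hxy
    refine ⟨i, Finset.mem_filter.mpr ⟨Finset.mem_univ i, ?_⟩⟩
    intro h
    apply hi
    have hl := (hlam i).ne'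
    rw [show rx i = x i / lam i from rfl, show ry i = y i / lam i from rfl,
      div_eq_div_iff hl hl] at h
    exact mul_right_cancel₀ hl h
  set T := Df.sup' hDfne (fun i => max (rx i) (ry i)) with hT
  have hle : ∀ i ∈ Df, rx i ≤ T ∧ ry i ≤ T := by
    intro i hi
    have := Finset.le_sup' (fun i => max (rx i) (ry i)) hi
    exact ⟨le_trans (le_max_left _ _) this, le_trans (le_max_right _ _) this⟩
  obtain ⟨i0, hi0D, hi0⟩ := Finset.exists_mem_eq_sup' hDfne (fun i => max (rx i) (ry i))
  -- midpoint ratios of differing indices are strictly below T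
  have hmidlt : ∀ i ∈ Df, mid i / lam i < T := by
    intro i hi
    rw [hrc i]
    have h1 := (hle i hi).1
    have h2 := (hle i hi).2
    have hne : rx i ≠ ry i := (Finset.mem_filter.mp hi).2
    rcases eq_or_lt_of_le h1 with h1' | h1'
    · rcases eq_or_lt_of_le h2 with h2' | h2'
      · exact absurd (h1'.trans h2'.symm) hne
      · linarith
    · linarith
  have hmideq : ∀ i, i ∉ Df → mid i / lam i = rx i := by
    intro i hi
    have : rx i = ry i := by
      by_contra h
      exact hi (Finset.mem_filter.mpr ⟨Finset.mem_univ i, h⟩)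
    rw [hrc i, ← this]
    ring
  -- (a) level sizes of midpoint and x agree above T
  have hAbove : ∀ z : ℝ, T < z → levelSize lam mid z = levelSize lam x z := by
    intro z hz
    unfold levelSize
    congr 1
    apply Finset.filter_congr
    intro i _
    by_cases hi : i ∈ Df
    · constructor
      · intro h; exact absurd h (not_le.mpr (lt_trans (hmidlt i hi) hz))
      · intro h
        exact absurd h (not_le.mpr (lt_of_le_of_lt (hle i hi).1 hz))
    · rw [hmideq i hi]
  -- (b) strictly smaller level size at T
  have hAt : levelSize lam mid T < levelSize lam x T := by
    unfold levelSize
    apply Finset.card_lt_card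
    constructor
    · intro i hi
      rw [Finset.mem_filter] at hi ⊢
      refine ⟨hi.1, ?_⟩
      by_cases hd : i ∈ Df
      · exact absurd hi.2 (not_le.mpr (hmidlt i hd))
      · show T ≤ rx i
        rw [← hmideq i hd]; exact hi.2
    · -- find a witness in Df with rx = T
      rw [Finset.not_subset]
      -- counts of value T among differing indices agree for x and y
      have hcnteq : (Df.filter (fun i => rx i = T)).card = (Df.filter (fun i => ry i = T)).card := by
        have hout : (Finset.univ \ Df).filter (fun i => rx i = T)
            = (Finset.univ \ Df).filter (fun i => ry i = T) := by
          apply Finset.filter_congr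
          intro i hi
          have : rx i = ry i := by
            rw [Finset.mem_sdiff, hDf, Finset.mem_filter] at hi
            by_contra h
            exact hi.2 ⟨Finset.mem_univ i, h⟩
          rw [this]
        have hsp : ∀ (r : Fin m → ℝ),
            (Finset.univ.filter (fun i => r i = T)).card
              = (Df.filter (fun i => r i = T)).card
                + ((Finset.univ \ Df).filter (fun i => r i = T)).card := by
          intro r
          rw [← Finset.card_union_of_disjoint]
          · congr 1
            rw [← Finset.filter_union]
            congr 1
            rw [Finset.union_sdiff_of_subset (Finset.subset_univ _)]
          · exact Finset.disjoint_filter_filter (Finset.disjoint_sdiff)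
        have e1 := hsp rx
        have e2 := hsp ry
        have e3 := hB T
        rw [hout] at e1
        omega
      have hwit : (Df.filter (fun i => rx i = T)).Nonempty := by
        rcases max_cases (rx i0) (ry i0) with ⟨h1, _⟩ | ⟨h1, _⟩
        · exact ⟨i0, Finset.mem_filter.mpr ⟨hi0D, by show rx i0 = T; rw [hT, hi0]; exact h1.symm⟩⟩
        · have : (Df.filter (fun i => ry i = T)).Nonempty :=
            ⟨i0, Finset.mem_filter.mpr ⟨hi0D, by show ry i0 = T; rw [hT, hi0]; exact h1.symm⟩⟩
          rw [← Finset.card_pos] at this ⊢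
          omega
      obtain ⟨j, hj⟩ := hwit
      rw [Finset.mem_filter] at hj
      refine ⟨j, Finset.mem_filter.mpr ⟨Finset.mem_univ j, le_of_eq hj.2.symm⟩, ?_⟩
      rw [Finset.mem_filter]
      rintro ⟨-, hc⟩
      exact absurd hc (not_le.mpr (hmidlt j hj.1))
  -- final assembly via sorted lists
  set Lc := sortedRatiosDesc lam mid with hLc
  set La := sortedRatiosDesc lam x with hLa
  set k := levelSize lam mid T with hk
  have hkc : k < Lc.length := by
    rw [auxLen]
    calc k < levelSize lam x T := hAt
    _ ≤ m := by
      rw [levelSize]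
      exact le_trans (Finset.card_filter_le _ _) (by simp)
  have hka : k < La.length := by
    rw [auxLen]
    calc k < levelSize lam x T := hAt
    _ ≤ m := by
      rw [levelSize]
      exact le_trans (Finset.card_filter_le _ _) (by simp)
  have hLcs := auxSorted lam mid
  have hLas := auxSorted lam x
  apply auxLex k Lc La
  · -- prefix equality
    intro i hi h1 h2
    have hiT_c : T ≤ Lc.get ⟨i, h1⟩ := by
      rw [auxSortedGet Lc hLcs i h1 T, ← auxLevel]
      omega
    have hiT_a : T ≤ La.get ⟨i, h2⟩ := by
      rw [auxSortedGet La hLas i h2 T, ← auxLevel]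
      have : k < levelSize lam x T := hAt
      omega
    rcases lt_trichotomy (Lc.get ⟨i, h1⟩) (La.get ⟨i, h2⟩) with h | h | h
    · exfalso
      set z := La.get ⟨i, h2⟩ with hz
      have hzT' : T < z := lt_of_le_of_lt hiT_c h
      have hza : z ≤ La.get ⟨i, h2⟩ := le_refl _
      rw [auxSortedGet La hLas i h2 z, ← auxLevel] at hza
      have hlev := hAbove z hzT'
      rw [auxLevel lam mid z, auxLevel lam x z] at hlev
      have : z ≤ Lc.get ⟨i, h1⟩ := by
        rw [auxSortedGet Lc hLcs i h1 z, ← auxLevel, auxLevel lam mid z, hlev, ← auxLevel]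
        omega
      exact absurd h (not_lt.mpr this)
    · exact h
    · exfalso
      set z := Lc.get ⟨i, h1⟩ with hz
      have hzT' : T < z := lt_of_le_of_lt hiT_a h
      have hza : z ≤ Lc.get ⟨i, h1⟩ := le_refl _
      rw [auxSortedGet Lc hLcs i h1 z, ← auxLevel] at hza
      have hlev := hAbove z hzT'
      rw [auxLevel lam mid z, auxLevel lam x z] at hlev
      have : z ≤ La.get ⟨i, h2⟩ := by
        rw [auxSortedGet La hLas i h2 z, ← auxLevel, auxLevel lam x z, ← hlev, ← auxLevel]
        omega
      exact absurd h (not_lt.mpr this)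
  · -- strict inequality at position k
    have hc : Lc.get ⟨k, hkc⟩ < T := by
      by_contra h
      push_neg at h
      rw [auxSortedGet Lc hLcs k hkc T, ← auxLevel] at h
      omega
    have ha : T ≤ La.get ⟨k, hka⟩ := by
      rw [auxSortedGet La hLas k hka T, ← auxLevel]
      exact hAt
    exact lt_of_lt_of_le hc ha
end

section
/- The minmax ratio equals the maximum cut ratio: if (G, d, λ) has no fatal cut, then min over weakly feasible flows x of max_e (x_e/λ_e) equals max over cuts C with λ_C > 0 of d_C/λ_C (where the maximum is taken as 0 if all such d_C ≤ 0). -/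
open Finset

/-- A nonnegative flow satisfying the conservation law `A_G x = d`. -/
def WeaklyFeasible {V E : Type*} [Fintype E] [DecidableEq V]
    (tail head : E → V) (d : V → ℝ) (x : E → ℝ) : Prop :=
  (∀ e, 0 ≤ x e) ∧
  ∀ v : V, (∑ e ∈ Finset.univ.filter (fun e => tail e = v), x e)
      - (∑ e ∈ Finset.univ.filter (fun e => head e = v), x e) = d v

/-- The set `E_C` of arcs crossing the cut `(S, Sᶜ)` in the forward direction. -/
def fwd {V E : Type*} [Fintype E] [DecidableEq V] (tail head : E → V) (S : Finset V) :
    Finset E :=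
  Finset.univ.filter (fun e => tail e ∈ S ∧ head e ∉ S)

/-- No fatal cut: every cut with no forward arc has nonpositive deficiency. -/
def NoFatalCut {V E : Type*} [Fintype V] [Fintype E] [DecidableEq V]
    (tail head : E → V) (d : V → ℝ) : Prop :=
  ∀ S : Finset V, S.Nonempty → Sᶜ.Nonempty → fwd tail head S = ∅ → ∑ v ∈ S, d v ≤ 0

/-- The maximum cut ratio `r⁰ = max_C d_C / λ_C` over cuts `C` with `E_C ≠ ∅`,
taken to be `0` if no ratio is positive (`0` is inserted into the maximum). -/
noncomputable def maxCutRatio {V E : Type*} [Fintype V] [Fintype E] [DecidableEq V]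
    (tail head : E → V) (d : V → ℝ) (lam : E → ℝ) : ℝ :=
  Finset.max'
    (insert (0 : ℝ)
      (((Finset.univ : Finset (Finset V)).filter
          (fun S => S.Nonempty ∧ Sᶜ.Nonempty ∧ (fwd tail head S).Nonempty)).image
        (fun S => (∑ v ∈ S, d v) / ∑ e ∈ fwd tail head S, lam e)))
    (Finset.insert_nonempty _ _)
section Aux

variable {V E : Type*} [Fintype V] [Fintype E] [DecidableEq V]

private lemma fiber_sum (g : E → V) (x : E → ℝ) (y : V → ℝ) :
    ∑ v, y v * ∑ e ∈ Finset.univ.filter (fun e => g e = v), x e = ∑ e, x e * y (g e) := by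
  rw [← Finset.sum_fiberwise Finset.univ g (fun e => x e * y (g e))]
  refine Finset.sum_congr rfl fun v _ => ?_
  rw [Finset.mul_sum]
  refine Finset.sum_congr rfl fun e he => ?_
  rw [(Finset.mem_filter.1 he).2]
  ring

private lemma div_pairing (tail head : E → V) (x : E → ℝ) (y : V → ℝ) :
    ∑ v, y v * ((∑ e ∈ Finset.univ.filter (fun e => tail e = v), x e)
      - ∑ e ∈ Finset.univ.filter (fun e => head e = v), x e)
    = ∑ e, x e * (y (tail e) - y (head e)) := by
  have h : ∑ e, x e * (y (tail e) - y (head e))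
      = ∑ e, (x e * y (tail e) - x e * y (head e)) :=
    Finset.sum_congr rfl fun e _ => by ring
  rw [h, Finset.sum_sub_distrib, ← fiber_sum tail x y, ← fiber_sum head x y,
    ← Finset.sum_sub_distrib]
  exact Finset.sum_congr rfl fun v _ => by ring

private lemma cut_le (tail head : E → V) (d : V → ℝ) (x : E → ℝ)
    (hx : WeaklyFeasible tail head d x) (S : Finset V) :
    ∑ v ∈ S, d v ≤ ∑ e ∈ fwd tail head S, x e := by
  classical
  have h1 : ∑ v, (if v ∈ S then (1:ℝ) else 0)
      * ((∑ e ∈ Finset.univ.filter (fun e => tail e = v), x e)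
        - ∑ e ∈ Finset.univ.filter (fun e => head e = v), x e) = ∑ v ∈ S, d v := by
    calc ∑ v, (if v ∈ S then (1:ℝ) else 0) * _
        = ∑ v, (if v ∈ S then d v else 0) := Finset.sum_congr rfl fun v _ => by
          rw [hx.2 v]; by_cases h : v ∈ S <;> simp [h]
      _ = ∑ v ∈ S, d v := by rw [Finset.sum_ite_mem, Finset.univ_inter]
  rw [← h1, div_pairing tail head x (fun v => if v ∈ S then (1:ℝ) else 0)]
  have h2 : ∑ e ∈ fwd tail head S, x e
      = ∑ e, if tail e ∈ S ∧ head e ∉ S then x e else 0 := by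
    rw [fwd, Finset.sum_filter]
  rw [h2]
  refine Finset.sum_le_sum fun e _ => ?_
  by_cases ht : tail e ∈ S <;> by_cases hh : head e ∈ S <;> simp [ht, hh] <;>
    linarith [hx.1 e]

private lemma keyIneq [Nonempty V] (tail head : E → V) (d : V → ℝ) (hd : ∑ v, d v = 0)
    (c : E → ℝ) (hc : ∀ e, 0 ≤ c e)
    (hcut : ∀ S : Finset V, S.Nonempty → Sᶜ.Nonempty →
      ∑ v ∈ S, d v ≤ ∑ e ∈ fwd tail head S, c e) :
    ∀ n : ℕ, ∀ y : V → ℝ, (Finset.univ.image y).card ≤ n →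
      ∑ v, y v * d v ≤ ∑ e, c e * max (y (tail e) - y (head e)) 0 := by
  intro n
  induction n with
  | zero =>
    intro y hy
    have := Finset.card_pos.2 (Finset.univ_nonempty.image y)
    omega
  | succ n ih =>
    intro y hy
    classical
    by_cases hone : (Finset.univ.image y).card ≤ 1
    · obtain ⟨v0⟩ := (inferInstance : Nonempty V)
      have hconst : ∀ v, y v = y v0 := fun v =>
        Finset.card_le_one.1 hone _ (Finset.mem_image_of_mem y (Finset.mem_univ v)) _
          (Finset.mem_image_of_mem y (Finset.mem_univ v0))
      have h0 : ∑ v, y v * d v = y v0 * ∑ v, d v := by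
        rw [Finset.mul_sum]
        exact Finset.sum_congr rfl fun v _ => by rw [hconst v]
      rw [h0, hd, mul_zero]
      exact Finset.sum_nonneg fun e _ => mul_nonneg (hc e) (le_max_right _ _)
    · push_neg at hone
      set T := Finset.univ.image y with hT
      have hTne : T.Nonempty := Finset.univ_nonempty.image y
      set m := T.min' hTne with hmdef
      have hmem : m ∈ T := T.min'_mem hTne
      have hm_le : ∀ v, m ≤ y v := fun v =>
        T.min'_le _ (Finset.mem_image_of_mem y (Finset.mem_univ v))
      have hT'ne : (T.erase m).Nonempty := by
        rw [← Finset.card_pos, Finset.card_erase_of_mem hmem]; omega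
      set m' := (T.erase m).min' hT'ne with hm'def
      have hm'mem : m' ∈ T.erase m := Finset.min'_mem _ _
      have hm'ne : m' ≠ m := (Finset.mem_erase.1 hm'mem).1
      have hmm' : m < m' :=
        lt_of_le_of_ne (T.min'_le _ (Finset.mem_erase.1 hm'mem).2) (Ne.symm hm'ne)
      have hstep : ∀ v, y v ≠ m → m' ≤ y v := fun v hv =>
        Finset.min'_le _ _ (Finset.mem_erase.2
          ⟨hv, Finset.mem_image_of_mem y (Finset.mem_univ v)⟩)
      set S := Finset.univ.filter (fun v => y v ≠ m) with hSdef
      have hSmem : ∀ v, v ∈ S ↔ y v ≠ m := fun v => by simp [hSdef]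
      have hSne : S.Nonempty := by
        obtain ⟨w, _, hw⟩ := Finset.mem_image.1 (Finset.mem_erase.1 hm'mem).2
        exact ⟨w, (hSmem w).2 (by rw [hw]; exact hm'ne)⟩
      have hScne : Sᶜ.Nonempty := by
        obtain ⟨w, _, hw⟩ := Finset.mem_image.1 hmem
        exact ⟨w, Finset.mem_compl.2 (fun h => (hSmem w).1 h hw)⟩
      set y' := fun v => if y v = m then m' else y v with hy'def
      have himg : Finset.univ.image y' ⊆ T.erase m := by
        intro t ht
        obtain ⟨v, _, hv⟩ := Finset.mem_image.1 ht
        rw [← hv]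
        by_cases h : y v = m
        · simp only [hy'def, if_pos h]; exact hm'mem
        · simp only [hy'def, if_neg h]
          exact Finset.mem_erase.2 ⟨h, Finset.mem_image_of_mem y (Finset.mem_univ v)⟩
      have hcard : (Finset.univ.image y').card ≤ n := by
        have h := Finset.card_le_card himg
        rw [Finset.card_erase_of_mem hmem] at h
        omega
      have IH := ih y' hcard
      -- Identity 1
      have hfc : Finset.univ.filter (fun v => y v = m) = Sᶜ := by
        ext v; simp [hSdef]
      have h1 : ∑ v, (y v - y' v) * d v = (m - m') * ∑ v ∈ Sᶜ, d v := by
        rw [← hfc, Finset.mul_sum, Finset.sum_filter]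
        refine Finset.sum_congr rfl fun v _ => ?_
        by_cases h : y v = m <;> simp [hy'def, h]
      have h2 : ∑ v ∈ Sᶜ, d v = - ∑ v ∈ S, d v := by
        have h := Finset.sum_add_sum_compl S d
        rw [hd] at h; linarith
      have h1' : ∑ v, (y v - y' v) * d v = (m' - m) * ∑ v ∈ S, d v := by
        rw [h1, h2]; ring
      have h3 : ∑ v, (y v - y' v) * d v = ∑ v, y v * d v - ∑ v, y' v * d v := by
        rw [← Finset.sum_sub_distrib]
        exact Finset.sum_congr rfl fun v _ => by ring
      have hid1 : ∑ v, y v * d v = ∑ v, y' v * d v + (m' - m) * ∑ v ∈ S, d v := by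
        linarith
      -- Identity 2
      have hfwd : ∀ e : E, e ∈ fwd tail head S ↔ (y (tail e) ≠ m ∧ y (head e) = m) := by
        intro e; simp [fwd, hSdef]
      have hper : ∀ e, c e * max (y (tail e) - y (head e)) 0
          = c e * max (y' (tail e) - y' (head e)) 0
            + (if e ∈ fwd tail head S then (m' - m) * c e else 0) := by
        intro e
        by_cases ht : y (tail e) = m <;> by_cases hh : y (head e) = m
        · rw [if_neg (fun hc' => ((hfwd e).1 hc').1 ht)]
          simp only [hy'def, if_pos ht, if_pos hh, ht, hh, sub_self, max_self, add_zero]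
        · rw [if_neg (fun hc' => hh ((hfwd e).1 hc').2)]
          simp only [hy'def, if_pos ht, if_neg hh, add_zero, ht]
          rw [max_eq_right (by linarith [hm_le (head e)]),
            max_eq_right (by linarith [hstep _ hh])]
        · rw [if_pos ((hfwd e).2 ⟨ht, hh⟩)]
          simp only [hy'def, if_neg ht, if_pos hh, hh]
          rw [max_eq_left (by linarith [hstep _ ht]),
            max_eq_left (by linarith [hstep _ ht])]
          ring
        · rw [if_neg (fun hc' => hh ((hfwd e).1 hc').2)]
          simp only [hy'def, if_neg ht, if_neg hh, add_zero]
      have hid2 : ∑ e, c e * max (y (tail e) - y (head e)) 0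
          = (∑ e, c e * max (y' (tail e) - y' (head e)) 0)
            + (m' - m) * ∑ e ∈ fwd tail head S, c e := by
        calc ∑ e, c e * max (y (tail e) - y (head e)) 0
            = ∑ e, (c e * max (y' (tail e) - y' (head e)) 0
              + (if e ∈ fwd tail head S then (m' - m) * c e else 0)) :=
              Finset.sum_congr rfl fun e _ => hper e
          _ = (∑ e, c e * max (y' (tail e) - y' (head e)) 0)
              + ∑ e, (if e ∈ fwd tail head S then (m' - m) * c e else 0) :=
              Finset.sum_add_distrib
          _ = _ := by
              rw [Finset.sum_ite_mem, Finset.univ_inter, ← Finset.mul_sum]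
      have hcutS := hcut S hSne hScne
      have hmul : (m' - m) * ∑ v ∈ S, d v ≤ (m' - m) * ∑ e ∈ fwd tail head S, c e :=
        mul_le_mul_of_nonneg_left hcutS (by linarith)
      rw [hid1, hid2]
      linarith

private noncomputable def divMap (tail head : E → V) : (E → ℝ) →ₗ[ℝ] (V → ℝ) where
  toFun x v := (∑ e ∈ Finset.univ.filter (fun e => tail e = v), x e)
      - ∑ e ∈ Finset.univ.filter (fun e => head e = v), x e
  map_add' x y := by
    funext v
    simp only [Pi.add_apply, Finset.sum_add_distrib]
    ring
  map_smul' r x := by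
    funext v
    simp only [Pi.smul_apply, smul_eq_mul, RingHom.id_apply, ← Finset.mul_sum]
    ring

end Aux

theorem minmax_ratio_eq_maxCutRatio
    {V E : Type*} [Fintype V] [DecidableEq V] [Fintype E] [Nonempty E]
    (tail head : E → V) (d : V → ℝ) (lam : E → ℝ)
    (hd : ∑ v, d v = 0) (hlam : ∀ e, 0 < lam e)
    (hnf : NoFatalCut tail head d) :
    IsLeast {r : ℝ | ∃ x : E → ℝ, WeaklyFeasible tail head d x ∧ ∀ e, x e ≤ r * lam e}
      (maxCutRatio tail head d lam) := by
  classical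
  haveI hVne : Nonempty V := ⟨tail (Classical.arbitrary E)⟩
  set r0 := maxCutRatio tail head d lam with hr0def
  have hr0 : 0 ≤ r0 := Finset.le_max' _ 0 (Finset.mem_insert_self _ _)
  have hratio : ∀ S : Finset V, S.Nonempty → Sᶜ.Nonempty → (fwd tail head S).Nonempty →
      (∑ v ∈ S, d v) / (∑ e ∈ fwd tail head S, lam e) ≤ r0 := by
    intro S h1 h2 h3
    refine Finset.le_max' _ _ (Finset.mem_insert_of_mem ?_)
    rw [Finset.mem_image]
    refine ⟨S, ?_, rfl⟩
    rw [Finset.mem_filter]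
    exact ⟨Finset.mem_univ _, h1, h2, h3⟩
  have hlamS : ∀ S : Finset V, (fwd tail head S).Nonempty →
      0 < ∑ e ∈ fwd tail head S, lam e :=
    fun S h => Finset.sum_pos (fun e _ => hlam e) h
  have hcut : ∀ S : Finset V, S.Nonempty → Sᶜ.Nonempty →
      ∑ v ∈ S, d v ≤ ∑ e ∈ fwd tail head S, (r0 * lam e) := by
    intro S h1 h2
    by_cases h3 : (fwd tail head S).Nonempty
    · have hpos := hlamS S h3
      have h4 := hratio S h1 h2 h3
      rw [div_le_iff₀ hpos] at h4
      calc ∑ v ∈ S, d v ≤ r0 * ∑ e ∈ fwd tail head S, lam e := h4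
        _ = ∑ e ∈ fwd tail head S, r0 * lam e := Finset.mul_sum _ _ _
    · rw [Finset.not_nonempty_iff_eq_empty] at h3
      rw [h3, Finset.sum_empty]
      exact hnf S h1 h2 h3
  constructor
  · -- membership
    set c : E → ℝ := fun e => r0 * lam e with hcdef
    have hc : ∀ e, 0 ≤ c e := fun e => mul_nonneg hr0 (hlam e).le
    set box : Set (E → ℝ) := Set.univ.pi (fun e => Set.Icc 0 (c e)) with hbox
    have hboxc : IsCompact box := isCompact_univ_pi fun e => isCompact_Icc
    have hboxconv : Convex ℝ box := convex_pi fun e _ => convex_Icc _ _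
    have hLcont : Continuous (divMap tail head : (E → ℝ) →ₗ[ℝ] (V → ℝ)) :=
      (divMap tail head).continuous_of_finiteDimensional
    have hKc : IsCompact (divMap tail head '' box) := hboxc.image hLcont
    have hKconv : Convex ℝ (divMap tail head '' box) :=
      hboxconv.linear_image (divMap tail head)
    have hdK : d ∈ divMap tail head '' box := by
      by_contra hdk
      obtain ⟨f, u, hfb, hfd⟩ :=
        geometric_hahn_banach_closed_point hKconv hKc.isClosed hdk
      set y : V → ℝ := fun v => f (fun j => if v = j then (1:ℝ) else 0) with hydef
      have hf : ∀ z : V → ℝ, f z = ∑ v, z v * y v := by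
        intro z
        conv_lhs => rw [pi_eq_sum_univ z]
        rw [map_sum]
        exact Finset.sum_congr rfl fun v _ => by
          rw [map_smul]; simp [hydef, smul_eq_mul]
      set xs : E → ℝ := fun e => if 0 < y (tail e) - y (head e) then c e else 0 with hxs
      have hxsbox : xs ∈ box := by
        intro e _
        refine ⟨?_, ?_⟩ <;> simp only [hxs] <;> split
        · exact hc e
        · exact le_rfl
        · exact le_rfl
        · exact hc e
      have hLxs : f (divMap tail head xs) = ∑ e, c e * max (y (tail e) - y (head e)) 0 := by
        rw [hf]
        calc ∑ v, (divMap tail head xs) v * y v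
            = ∑ v, y v * (divMap tail head xs) v :=
              Finset.sum_congr rfl fun v _ => mul_comm _ _
          _ = ∑ e, xs e * (y (tail e) - y (head e)) := div_pairing tail head xs y
          _ = ∑ e, c e * max (y (tail e) - y (head e)) 0 := by
              refine Finset.sum_congr rfl fun e _ => ?_
              by_cases h : 0 < y (tail e) - y (head e)
              · simp only [hxs, if_pos h, max_eq_left h.le]
              · simp only [hxs, if_neg h, max_eq_right (not_lt.1 h), zero_mul, mul_zero]
      have h1 : f (divMap tail head xs) < u := hfb _ (Set.mem_image_of_mem _ hxsbox)
      have h3 : f d = ∑ v, y v * d v := by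
        rw [hf]; exact Finset.sum_congr rfl fun v _ => mul_comm _ _
      have h4 := keyIneq tail head d hd c hc hcut (Finset.univ.image y).card y le_rfl
      rw [hLxs] at h1
      rw [h3] at hfd
      linarith
    obtain ⟨x, hxbox, hLx⟩ := hdK
    refine ⟨x, ⟨fun e => (hxbox e (Set.mem_univ e)).1, fun v => congrFun hLx v⟩,
      fun e => (hxbox e (Set.mem_univ e)).2⟩
  · -- lower bound
    rintro r ⟨x, hx, hxr⟩
    apply Finset.max'_le
    intro b hb
    rcases Finset.mem_insert.1 hb with hb | hb
    · subst hb
      have e0 := Classical.arbitrary E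
      nlinarith [hx.1 e0, hxr e0, hlam e0]
    · obtain ⟨S, hS, rfl⟩ := Finset.mem_image.1 hb
      obtain ⟨-, h1, h2, h3⟩ := Finset.mem_filter.1 hS
      rw [div_le_iff₀ (hlamS S h3)]
      calc ∑ v ∈ S, d v ≤ ∑ e ∈ fwd tail head S, x e := cut_le tail head d x hx S
        _ ≤ ∑ e ∈ fwd tail head S, r * lam e := Finset.sum_le_sum fun e _ => hxr e
        _ = r * ∑ e ∈ fwd tail head S, lam e := (Finset.mul_sum _ _ _).symm
end

section
/- Every weakly feasible minmax flow loads each critical cut uniformly: if x is weakly feasible and max_e x_e/λ_e = r⁰ (the minmax ratio), and C⁰ is a cut with d_{C⁰}/λ_{C⁰} = r⁰ > 0, then x_e = r⁰ λ_e for every edge e ∈ E_{C⁰}, and moreover x_e = 0 for every edge directed from V'' to V' across C⁰. -/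
open Finset

theorem minmax_flow_loads_critical_cut_uniformly
    {V E : Type*} [Fintype V] [DecidableEq V] [Fintype E] [Nonempty E]
    (tail head : E → V) (d : V → ℝ) (lam : E → ℝ)
    (hd : ∑ v, d v = 0) (hlam : ∀ e, 0 < lam e)
    (hnf : NoFatalCut tail head d)
    (x : E → ℝ) (hx : WeaklyFeasible tail head d x)
    (hminmax : ∀ e, x e ≤ maxCutRatio tail head d lam * lam e)
    (S : Finset V) (hS : S.Nonempty) (hS' : Sᶜ.Nonempty)
    (hcrit : ∑ v ∈ S, d v = maxCutRatio tail head d lam * ∑ e ∈ fwd tail head S, lam e)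
    (hr0pos : 0 < maxCutRatio tail head d lam) :
    (∀ e, tail e ∈ S → head e ∉ S → x e = maxCutRatio tail head d lam * lam e) ∧
      (∀ e, head e ∈ S → tail e ∉ S → x e = 0) := by
  set r := maxCutRatio tail head d lam with hr
  obtain ⟨hxnn, hcons⟩ := hx
  -- Sum the conservation law over S.
  have hsum : ∑ v ∈ S, d v =
      (∑ e ∈ Finset.univ.filter (fun e => tail e ∈ S), x e)
        - ∑ e ∈ Finset.univ.filter (fun e => head e ∈ S), x e := by
    calc ∑ v ∈ S, d v
        = ∑ v ∈ S, ((∑ e ∈ Finset.univ.filter (fun e => tail e = v), x e)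
            - ∑ e ∈ Finset.univ.filter (fun e => head e = v), x e) := by
          exact (Finset.sum_congr rfl fun v _ => (hcons v).symm)
      _ = (∑ v ∈ S, ∑ e ∈ Finset.univ.filter (fun e => tail e = v), x e)
            - ∑ v ∈ S, ∑ e ∈ Finset.univ.filter (fun e => head e = v), x e := by
          rw [Finset.sum_sub_distrib]
      _ = _ := by
          rw [Finset.sum_fiberwise_eq_sum_filter _ _ tail x,
            Finset.sum_fiberwise_eq_sum_filter _ _ head x]
  -- Split by whether the other endpoint is in S; the "both in S" parts cancel.
  have hsplit1 : ∑ e ∈ Finset.univ.filter (fun e => tail e ∈ S), x e =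
      (∑ e ∈ Finset.univ.filter (fun e => tail e ∈ S ∧ head e ∈ S), x e)
        + ∑ e ∈ fwd tail head S, x e := by
    rw [fwd, ← Finset.sum_filter_add_sum_filter_not
      (Finset.univ.filter (fun e => tail e ∈ S)) (fun e => head e ∈ S) x,
      Finset.filter_filter, Finset.filter_filter]
  have hsplit2 : ∑ e ∈ Finset.univ.filter (fun e => head e ∈ S), x e =
      (∑ e ∈ Finset.univ.filter (fun e => tail e ∈ S ∧ head e ∈ S), x e)
        + ∑ e ∈ Finset.univ.filter (fun e => head e ∈ S ∧ tail e ∉ S), x e := by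
    rw [← Finset.sum_filter_add_sum_filter_not
      (Finset.univ.filter (fun e => head e ∈ S)) (fun e => tail e ∈ S) x,
      Finset.filter_filter, Finset.filter_filter]
    congr 1
    apply Finset.sum_congr _ fun _ _ => rfl
    apply Finset.filter_congr
    intro e _
    simp [and_comm]
  have hkey : ∑ v ∈ S, d v = (∑ e ∈ fwd tail head S, x e)
      - ∑ e ∈ Finset.univ.filter (fun e => head e ∈ S ∧ tail e ∉ S), x e := by
    rw [hsum, hsplit1, hsplit2]; ring
  have hback_nn : 0 ≤ ∑ e ∈ Finset.univ.filter (fun e => head e ∈ S ∧ tail e ∉ S), x e :=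
    Finset.sum_nonneg fun e _ => hxnn e
  have hfwd_le : ∑ e ∈ fwd tail head S, x e ≤ r * ∑ e ∈ fwd tail head S, lam e := by
    rw [Finset.mul_sum]
    exact Finset.sum_le_sum fun e _ => hminmax e
  -- r * Σλ = d_S = Σfwd x - Σbwd x ≤ Σfwd x ≤ r * Σλ, so both inequalities are equalities.
  have h1 : ∑ e ∈ fwd tail head S, x e = r * ∑ e ∈ fwd tail head S, lam e := by
    have := hcrit
    rw [hkey] at this
    linarith
  have h2 : ∑ e ∈ Finset.univ.filter (fun e => head e ∈ S ∧ tail e ∉ S), x e = 0 := by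
    have := hcrit
    rw [hkey] at this
    linarith
  constructor
  · intro e he1 he2
    have hmem : e ∈ fwd tail head S := by
      simp [fwd, he1, he2]
    have := (Finset.sum_eq_sum_iff_of_le (fun e _ => hminmax e)).mp
      (by rw [h1, Finset.mul_sum]) e hmem
    exact this
  · intro e he1 he2
    have hmem : e ∈ Finset.univ.filter (fun e => head e ∈ S ∧ tail e ∉ S) := by
      simp [he1, he2]
    exact (Finset.sum_eq_zero_iff_of_nonneg (fun e _ => hxnn e)).mp h2 e hmem
end

section
/- Monotonicity of successive minmax ratios: let C⁰ be a critical cut of (G, d, λ) with ratio r⁰, and form the reduced problem (G¹, d¹, λ¹) by deleting the edges of E_{C⁰} (and all edges from V'' to V') and updating d by subtracting the fixed flow r⁰λ_e at the endpoints of each deleted edge. Then the minmax ratio r¹ of (G¹, d¹, λ¹) satisfies r¹ ≤ r⁰. -/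
open Finset

/-- Arcs of the reduced digraph `G¹`: arcs not crossing the cut in either direction. -/
def NotCrossing {V E : Type*} [DecidableEq V] (tail head : E → V) (S : Finset V)
    (e : E) : Prop :=
  ¬(tail e ∈ S ∧ head e ∉ S) ∧ ¬(head e ∈ S ∧ tail e ∉ S)

instance {V E : Type*} [DecidableEq V] (tail head : E → V) (S : Finset V) :
    DecidablePred (NotCrossing tail head S) := fun e =>
  inferInstanceAs (Decidable (_ ∧ _))

/-- The updated supply vector `d¹` after fixing flow `r⁰ λ_e` on each deleted forward
arc (and `0` on each deleted backward arc). -/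
noncomputable def reducedD {V E : Type*} [Fintype E] [DecidableEq V]
    (tail head : E → V) (d : V → ℝ) (lam : E → ℝ) (r0 : ℝ) (S : Finset V) (v : V) : ℝ :=
  d v - r0 * (∑ e ∈ (fwd tail head S).filter (fun e => tail e = v), lam e)
      + r0 * (∑ e ∈ (fwd tail head S).filter (fun e => head e = v), lam e)

/-- Weak feasibility for the reduced problem `(G¹, d¹, λ¹)`. -/
noncomputable def WeaklyFeasibleReduced {V E : Type*} [Fintype E] [DecidableEq V]
    (tail head : E → V) (d : V → ℝ) (lam : E → ℝ) (r0 : ℝ) (S : Finset V)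
    (x : E → ℝ) : Prop :=
  (∀ e, NotCrossing tail head S e → 0 ≤ x e) ∧
  ∀ v : V,
    (∑ e ∈ Finset.univ.filter (fun e => NotCrossing tail head S e ∧ tail e = v), x e)
      - (∑ e ∈ Finset.univ.filter (fun e => NotCrossing tail head S e ∧ head e = v), x e)
      = reducedD tail head d lam r0 S v

section helpers
variable {V E : Type*} [Fintype V] [DecidableEq V] [Fintype E]

noncomputable def exc (tail head : E → V) (d : V → ℝ) (x : E → ℝ) (v : V) : ℝ :=
  d v - ((∑ e ∈ Finset.univ.filter (fun e => tail e = v), x e)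
       - (∑ e ∈ Finset.univ.filter (fun e => head e = v), x e))

def bwd {V E : Type*} [Fintype E] [DecidableEq V] (tail head : E → V) (S : Finset V) :
    Finset E :=
  Finset.univ.filter (fun e => head e ∈ S ∧ tail e ∉ S)

lemma sum_exc (tail head : E → V) (d : V → ℝ) (x : E → ℝ) (S : Finset V) :
    ∑ v ∈ S, exc tail head d x v
      = ∑ v ∈ S, d v - ((∑ e ∈ fwd tail head S, x e) - ∑ e ∈ bwd tail head S, x e) := by
  have h1 : ∑ v ∈ S, exc tail head d x v
      = ∑ v ∈ S, d v - ((∑ e ∈ Finset.univ.filter (fun e => tail e ∈ S), x e)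
        - (∑ e ∈ Finset.univ.filter (fun e => head e ∈ S), x e)) := by
    unfold exc
    rw [Finset.sum_sub_distrib, Finset.sum_sub_distrib,
        Finset.sum_fiberwise_eq_sum_filter Finset.univ S tail x,
        Finset.sum_fiberwise_eq_sum_filter Finset.univ S head x]
  rw [h1]
  have h2 : (∑ e ∈ Finset.univ.filter (fun e => tail e ∈ S), x e)
        - (∑ e ∈ Finset.univ.filter (fun e => head e ∈ S), x e)
      = (∑ e ∈ fwd tail head S, x e) - ∑ e ∈ bwd tail head S, x e := by
    unfold fwd bwd
    rw [Finset.sum_filter, Finset.sum_filter, Finset.sum_filter, Finset.sum_filter,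
        ← Finset.sum_sub_distrib, ← Finset.sum_sub_distrib]
    refine Finset.sum_congr rfl fun e _ => ?_
    by_cases h1 : tail e ∈ S <;> by_cases h2 : head e ∈ S <;> simp [h1, h2]
  rw [h2]

end helpers

section push
variable {V E : Type*} [Fintype V] [DecidableEq V] [Fintype E] [DecidableEq E]

lemma sum_update (x : E → ℝ) (e0 : E) (a : ℝ) (s : Finset E) :
    ∑ e ∈ s, Function.update x e0 a e
      = (∑ e ∈ s, x e) + (if e0 ∈ s then a - x e0 else 0) := by
  by_cases h : e0 ∈ s
  · rw [Finset.sum_update_of_mem h, if_pos h,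
      ← Finset.sum_erase_add s x h, Finset.sdiff_singleton_eq_erase]
    ring
  · rw [if_neg h, add_zero]
    refine Finset.sum_congr rfl fun e he => Function.update_of_ne ?_ _ _
    rintro rfl; exact h he

lemma exc_update (tail head : E → V) (d : V → ℝ) (x : E → ℝ) (e0 : E) (δ : ℝ) (v : V) :
    exc tail head d (Function.update x e0 (x e0 + δ)) v
      = exc tail head d x v - (if tail e0 = v then δ else 0)
        + (if head e0 = v then δ else 0) := by
  unfold exc
  rw [sum_update, sum_update]
  simp only [Finset.mem_filter, Finset.mem_univ, true_and]
  split_ifs <;> ring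

lemma f_update (tail head : E → V) (d : V → ℝ) (x : E → ℝ) (e0 : E)
    (hne : tail e0 ≠ head e0) (δ : ℝ) :
    ∑ v, (exc tail head d (Function.update x e0 (x e0 + δ)) v) ^ 2
      = (∑ v, (exc tail head d x v) ^ 2)
        + 2 * δ * (exc tail head d x (head e0) - exc tail head d x (tail e0))
        + 2 * δ ^ 2 := by
  have key : ∀ v, (exc tail head d (Function.update x e0 (x e0 + δ)) v) ^ 2
      = (exc tail head d x v) ^ 2
        + ((if v = tail e0 then -2 * δ * exc tail head d x (tail e0) + δ ^ 2 else 0)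
          + (if v = head e0 then 2 * δ * exc tail head d x (head e0) + δ ^ 2 else 0)) := by
    intro v
    rw [exc_update]
    by_cases h1 : v = tail e0 <;> by_cases h2 : v = head e0
    · exact absurd (h1.symm.trans h2) hne
    · subst h1
      rw [if_pos rfl, if_neg (Ne.symm hne), if_pos rfl, if_neg hne]
      ring
    · subst h2
      rw [if_neg hne, if_pos rfl, if_neg (Ne.symm hne), if_pos rfl]
      ring
    · rw [if_neg (fun h => h1 h.symm), if_neg (fun h => h2 h.symm), if_neg h1, if_neg h2]
      ring
  rw [Finset.sum_congr rfl fun v _ => key v, Finset.sum_add_distrib, Finset.sum_add_distrib]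
  simp only [Finset.sum_ite_eq' Finset.univ, Finset.mem_univ, if_pos]
  ring

end push

section mainlemma
variable {V E : Type*} [Fintype V] [DecidableEq V] [Fintype E] [Nonempty V]

lemma exists_feasible (tail head : E → V) (d : V → ℝ) (lam : E → ℝ) (r0 : ℝ)
    (hd : ∑ v, d v = 0) (hlam : ∀ e, 0 < lam e)
    (hnf : NoFatalCut tail head d) (hr0 : 0 ≤ r0)
    (hcut : ∀ T : Finset V, T.Nonempty → Tᶜ.Nonempty → (fwd tail head T).Nonempty →
      ∑ v ∈ T, d v ≤ r0 * ∑ e ∈ fwd tail head T, lam e) :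
    ∃ x : E → ℝ, WeaklyFeasible tail head d x ∧ ∀ e, x e ≤ r0 * lam e := by
  classical
  set c : E → ℝ := fun e => r0 * lam e with hc
  have hcnn : ∀ e, (0:ℝ) ≤ c e := fun e => mul_nonneg hr0 (hlam e).le
  set f : (E → ℝ) → ℝ := fun x => ∑ v, (exc tail head d x v) ^ 2 with hf
  have hKc : IsCompact (Set.Icc (0 : E → ℝ) c) := isCompact_Icc
  have hKne : (Set.Icc (0 : E → ℝ) c).Nonempty :=
    ⟨0, Set.mem_Icc.mpr ⟨le_rfl, Pi.le_def.mpr fun e => hcnn e⟩⟩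
  have hfc : Continuous f := by
    apply continuous_finset_sum; intro v _
    have hce : Continuous fun x : E → ℝ => exc tail head d x v := by
      unfold exc
      exact continuous_const.sub ((continuous_finset_sum _ fun e _ => continuous_apply e).sub
        (continuous_finset_sum _ fun e _ => continuous_apply e))
    exact hce.pow 2
  obtain ⟨x, hxK, hmin⟩ := hKc.exists_isMinOn hKne hfc.continuousOn
  have hx0 : ∀ e, 0 ≤ x e := fun e => (Set.mem_Icc.mp hxK).1 e
  have hxc : ∀ e, x e ≤ c e := fun e => (Set.mem_Icc.mp hxK).2 e
  have claim : ∀ e0 : E, ∀ δ : ℝ, 0 ≤ x e0 + δ → x e0 + δ ≤ c e0 →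
      0 ≤ 2 * δ * (exc tail head d x (head e0) - exc tail head d x (tail e0))
        + 2 * δ ^ 2 := by
    intro e0 δ h1 h2
    by_cases hne : tail e0 = head e0
    · rw [hne]; simp; positivity
    · have hmem : Function.update x e0 (x e0 + δ) ∈ Set.Icc (0 : E → ℝ) c := by
        refine Set.mem_Icc.mpr ⟨Pi.le_def.mpr fun e => ?_, Pi.le_def.mpr fun e => ?_⟩
        · by_cases he : e = e0
          · subst he; simpa using h1
          · simpa [Function.update_of_ne he] using hx0 e
        · by_cases he : e = e0
          · subst he; simpa using h2
          · simpa [Function.update_of_ne he] using hxc e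
      have hle : (∑ v, (exc tail head d x v) ^ 2)
          ≤ ∑ v, (exc tail head d (Function.update x e0 (x e0 + δ)) v) ^ 2 :=
        isMinOn_iff.mp hmin _ hmem
      rw [f_update tail head d x e0 hne δ] at hle
      linarith
  have claim1 : ∀ e0, exc tail head d x (head e0) < exc tail head d x (tail e0) →
      x e0 = c e0 := by
    intro e0 hlt
    by_contra hnec
    have hxe : x e0 < c e0 := lt_of_le_of_ne (hxc e0) hnec
    set a := exc tail head d x (tail e0) - exc tail head d x (head e0) with ha
    have ha0 : 0 < a := by simp only [ha]; linarith
    set δ := min (c e0 - x e0) (a / 2) with hδ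
    have hδ0 : 0 < δ := lt_min (by linarith) (by linarith)
    have hδ1 : δ ≤ c e0 - x e0 := min_le_left _ _
    have hδ2 : δ ≤ a / 2 := min_le_right _ _
    have hcl := claim e0 δ (by linarith [hx0 e0]) (by linarith)
    nlinarith
  have claim2 : ∀ e0, exc tail head d x (tail e0) < exc tail head d x (head e0) →
      x e0 = 0 := by
    intro e0 hlt
    by_contra hnec
    have hxe : 0 < x e0 := lt_of_le_of_ne (hx0 e0) (Ne.symm hnec)
    set a := exc tail head d x (head e0) - exc tail head d x (tail e0) with ha
    have ha0 : 0 < a := by simp only [ha]; linarith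
    set ε := min (x e0) (a / 2) with hε
    have hε0 : 0 < ε := lt_min hxe (by linarith)
    have hε1 : ε ≤ x e0 := min_le_left _ _
    have hε2 : ε ≤ a / 2 := min_le_right _ _
    have hcl := claim e0 (-ε) (by linarith) (by linarith [hxc e0])
    nlinarith
  have hsum0 : ∑ v, exc tail head d x v = 0 := by
    rw [sum_exc]
    have h1 : fwd tail head (Finset.univ : Finset V) = ∅ := by simp [fwd]
    have h2 : bwd tail head (Finset.univ : Finset V) = ∅ := by simp [bwd]
    rw [h1, h2, hd]; simp
  have hexc0 : ∀ v, exc tail head d x v = 0 := by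
    by_contra hcon
    push_neg at hcon
    obtain ⟨v1, hv1⟩ := hcon
    obtain ⟨w0, -, hw0⟩ := Finset.exists_max_image (Finset.univ : Finset V)
      (exc tail head d x) ⟨v1, Finset.mem_univ v1⟩
    set m := exc tail head d x w0 with hm
    have hmle : ∀ v, exc tail head d x v ≤ m := fun v => hw0 v (Finset.mem_univ v)
    have hmpos : 0 < m := by
      by_contra hm0
      push_neg at hm0
      have hall : ∀ v ∈ Finset.univ, exc tail head d x v = 0 :=
        (Finset.sum_eq_zero_iff_of_nonpos (fun v _ => le_trans (hmle v) hm0)).mp hsum0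
      exact hv1 (hall v1 (Finset.mem_univ v1))
    set T := Finset.univ.filter (fun v => exc tail head d x v = m) with hT
    have hTne : T.Nonempty := ⟨w0, by simp [hT, hm]⟩
    have hTsum : ∑ v ∈ T, exc tail head d x v = T.card * m := by
      rw [Finset.sum_congr rfl (fun v hv => (Finset.mem_filter.mp hv).2)]
      simp [mul_comm]
      exact Or.inl rfl
    have hTpos : (0:ℝ) < ∑ v ∈ T, exc tail head d x v := by
      rw [hTsum]
      exact mul_pos (by exact_mod_cast Finset.card_pos.mpr hTne) hmpos
    have hTc : Tᶜ.Nonempty := by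
      by_contra hc0
      rw [Finset.not_nonempty_iff_eq_empty, Finset.compl_eq_empty_iff] at hc0
      rw [hc0, hsum0] at hTpos
      exact lt_irrefl _ hTpos
    have hsat : ∀ e ∈ fwd tail head T, x e = c e := by
      intro e he
      rw [fwd, Finset.mem_filter] at he
      apply claim1
      have h1 : exc tail head d x (tail e) = m := by
        have := he.2.1; rw [hT, Finset.mem_filter] at this; exact this.2
      have h2 : exc tail head d x (head e) ≠ m := by
        intro hcontra
        exact he.2.2 (by rw [hT, Finset.mem_filter]; exact ⟨Finset.mem_univ _, hcontra⟩)
      rw [h1]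
      exact lt_of_le_of_ne (hmle _) h2
    have hzer : ∀ e ∈ bwd tail head T, x e = 0 := by
      intro e he
      rw [bwd, Finset.mem_filter] at he
      apply claim2
      have h1 : exc tail head d x (head e) = m := by
        have := he.2.1; rw [hT, Finset.mem_filter] at this; exact this.2
      have h2 : exc tail head d x (tail e) ≠ m := by
        intro hcontra
        exact he.2.2 (by rw [hT, Finset.mem_filter]; exact ⟨Finset.mem_univ _, hcontra⟩)
      rw [h1]
      exact lt_of_le_of_ne (hmle _) h2
    have hkey := sum_exc tail head d x T
    rw [Finset.sum_congr rfl hsat, Finset.sum_eq_zero hzer] at hkey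
    have hcsum : ∑ e ∈ fwd tail head T, c e = r0 * ∑ e ∈ fwd tail head T, lam e := by
      rw [Finset.mul_sum]
    rw [hcsum] at hkey
    by_cases hfw : (fwd tail head T).Nonempty
    · have := hcut T hTne hTc hfw
      linarith
    · rw [Finset.not_nonempty_iff_eq_empty] at hfw
      have := hnf T hTne hTc hfw
      rw [hfw] at hkey
      simp at hkey
      linarith
  refine ⟨x, ⟨hx0, fun v => ?_⟩, fun e => hxc e⟩
  have := hexc0 v
  unfold exc at this
  linarith

end mainlemma

theorem reduced_minmax_ratio_le
    {V E : Type*} [Fintype V] [DecidableEq V] [Fintype E] [Nonempty E]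
    (tail head : E → V) (d : V → ℝ) (lam : E → ℝ)
    (hd : ∑ v, d v = 0) (hlam : ∀ e, 0 < lam e)
    (hnf : NoFatalCut tail head d)
    (S : Finset V) (hS : S.Nonempty) (hS' : Sᶜ.Nonempty)
    (hfwd : (fwd tail head S).Nonempty)
    (hcrit : ∑ v ∈ S, d v = maxCutRatio tail head d lam * ∑ e ∈ fwd tail head S, lam e)
    (r1 : ℝ)
    (hr1 : IsLeast {r : ℝ | ∃ x : E → ℝ,
        WeaklyFeasibleReduced tail head d lam (maxCutRatio tail head d lam) S x ∧
        ∀ e, NotCrossing tail head S e → x e ≤ r * lam e} r1) :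
    r1 ≤ maxCutRatio tail head d lam := by
  classical
  have hnV : Nonempty V := ⟨tail (Classical.arbitrary E)⟩
  set r0 := maxCutRatio tail head d lam with hr0def
  have hr0nn : 0 ≤ r0 := Finset.le_max' _ 0 (Finset.mem_insert_self _ _)
  have hcut : ∀ T : Finset V, T.Nonempty → Tᶜ.Nonempty → (fwd tail head T).Nonempty →
      ∑ v ∈ T, d v ≤ r0 * ∑ e ∈ fwd tail head T, lam e := by
    intro T h1 h2 h3
    have hL : 0 < ∑ e ∈ fwd tail head T, lam e := Finset.sum_pos (fun e _ => hlam e) h3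
    have hTmem : T ∈ (Finset.univ : Finset (Finset V)).filter
        (fun S => S.Nonempty ∧ Sᶜ.Nonempty ∧ (fwd tail head S).Nonempty) :=
      Finset.mem_filter.mpr ⟨Finset.mem_univ T, h1, h2, h3⟩
    have hmem : (∑ v ∈ T, d v) / (∑ e ∈ fwd tail head T, lam e) ∈
        insert (0:ℝ) (((Finset.univ : Finset (Finset V)).filter
          (fun S => S.Nonempty ∧ Sᶜ.Nonempty ∧ (fwd tail head S).Nonempty)).image
          (fun S => (∑ v ∈ S, d v) / ∑ e ∈ fwd tail head S, lam e)) :=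
      Finset.mem_insert_of_mem (Finset.mem_image_of_mem _ hTmem)
    have hle := Finset.le_max' _ _ hmem
    rw [div_le_iff₀ hL] at hle
    show ∑ v ∈ T, d v ≤ maxCutRatio tail head d lam * ∑ e ∈ fwd tail head T, lam e
    unfold maxCutRatio
    exact hle
  obtain ⟨x, ⟨hx0, hxcons⟩, hxle⟩ :=
    exists_feasible tail head d lam r0 hd hlam hnf hr0nn hcut
  have hz : ∀ v, exc tail head d x v = 0 := fun v => by
    unfold exc; rw [hxcons v]; ring
  have hDS : ∑ v ∈ S, d v
      = (∑ e ∈ fwd tail head S, x e) - ∑ e ∈ bwd tail head S, x e := by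
    have h := sum_exc tail head d x S
    rw [Finset.sum_eq_zero (fun v _ => hz v)] at h
    linarith
  have hA : ∑ e ∈ fwd tail head S, x e ≤ r0 * ∑ e ∈ fwd tail head S, lam e := by
    rw [Finset.mul_sum]; exact Finset.sum_le_sum (fun e _ => hxle e)
  have hB : 0 ≤ ∑ e ∈ bwd tail head S, x e := Finset.sum_nonneg fun e _ => hx0 e
  have hB0 : ∑ e ∈ bwd tail head S, x e = 0 := by
    rw [hcrit] at hDS; linarith
  have hA0 : ∑ e ∈ fwd tail head S, x e = r0 * ∑ e ∈ fwd tail head S, lam e := by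
    rw [hcrit] at hDS; linarith
  rw [Finset.mul_sum] at hA0
  have hfwdx : ∀ e ∈ fwd tail head S, x e = r0 * lam e :=
    fun e he => (Finset.sum_eq_sum_iff_of_le (fun e _ => hxle e)).mp hA0 e he
  have hbwdx : ∀ e ∈ bwd tail head S, x e = 0 :=
    fun e he => (Finset.sum_eq_zero_iff_of_nonneg (fun e _ => hx0 e)).mp hB0 e he
  have hred : ∀ v,
      (∑ e ∈ Finset.univ.filter (fun e => NotCrossing tail head S e ∧ tail e = v), x e)
      - (∑ e ∈ Finset.univ.filter (fun e => NotCrossing tail head S e ∧ head e = v), x e)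
      = reducedD tail head d lam r0 S v := by
    intro v
    have hdv : d v = (∑ e ∈ Finset.univ.filter (fun e => tail e = v), x e)
        - (∑ e ∈ Finset.univ.filter (fun e => head e = v), x e) := (hxcons v).symm
    unfold reducedD fwd
    rw [hdv, Finset.filter_filter, Finset.filter_filter]
    rw [Finset.sum_filter, Finset.sum_filter, Finset.sum_filter, Finset.sum_filter,
      Finset.sum_filter, Finset.sum_filter, Finset.mul_sum, Finset.mul_sum,
      ← Finset.sum_sub_distrib, ← Finset.sum_sub_distrib, ← Finset.sum_sub_distrib,
      ← Finset.sum_add_distrib]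
    refine Finset.sum_congr rfl fun e _ => ?_
    by_cases h1 : tail e ∈ S <;> by_cases h2 : head e ∈ S
    · simp [NotCrossing, h1, h2]
      try (split_ifs <;> ring)
    · have hx := hfwdx e (by simp [fwd, h1, h2])
      simp [NotCrossing, h1, h2, hx]
      try (split_ifs <;> ring)
    · have hx := hbwdx e (by simp [bwd, h1, h2])
      simp [NotCrossing, h1, h2, hx]
      try (split_ifs <;> ring)
    · simp [NotCrossing, h1, h2]
      try (split_ifs <;> ring)
  have hmem : r0 ∈ {r : ℝ | ∃ x : E → ℝ,
      WeaklyFeasibleReduced tail head d lam r0 S x ∧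
      ∀ e, NotCrossing tail head S e → x e ≤ r * lam e} :=
    ⟨x, ⟨fun e _ => hx0 e, hred⟩, fun e _ => hxle e⟩
  exact hr1.2 hmem
end
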